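/- arXiv:2208.04561 — 6 statements merged into one kernel-verified Lean document; each statement's English description precedes it below -/
import Mathlib

section
/- The semi-inner-product space V(Ω;γ) is complete: every Cauchy sequence with respect to the seminorm ‖v‖² = ∫_Ω v²(x) dx + ∫_Ω ∫_{ℝᵈ} (v(x)-v(y))² γ(y,x) dy dx converges to some element of V(Ω;γ) in this seminorm. -/
open MeasureTheory ENNReal Filter Topology

noncomputable section

abbrev Euc (d : ℕ) := EuclideanSpace ℝ (Fin d)

/-- The nonlocal energy ∫_Ω ∫_{ℝᵈ} (v(x)-v(y))² γ(y,x) dy dx (as an extended real). -/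
def energy {d : ℕ} (Ω : Set (Euc d)) (γ : Euc d → Euc d → ℝ) (v : Euc d → ℝ) : ℝ≥0∞ :=
  ∫⁻ x in Ω, ∫⁻ y, ENNReal.ofReal ((v x - v y) ^ 2 * γ y x)

/-- The squared seminorm ‖v‖²_{V(Ω;γ)} = ∫_Ω v² dx + energy. -/
def Vnorm {d : ℕ} (Ω : Set (Euc d)) (γ : Euc d → Euc d → ℝ) (v : Euc d → ℝ) : ℝ≥0∞ :=
  (∫⁻ x in Ω, ENNReal.ofReal ((v x) ^ 2)) + energy Ω γ v

/-- Membership in the function space V(Ω;γ). -/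
def memV {d : ℕ} (Ω : Set (Euc d)) (γ : Euc d → Euc d → ℝ) (v : Euc d → ℝ) : Prop :=
  Measurable v ∧ Vnorm Ω γ v < ⊤

/-- The nonlocal boundary Γ = {y ∉ Ω : ∫_Ω γ(y,x) dx > 0}. -/
def Gamma {d : ℕ} (Ω : Set (Euc d)) (γ : Euc d → Euc d → ℝ) : Set (Euc d) :=
  {y | y ∉ Ω ∧ 0 < ∫⁻ x in Ω, ENNReal.ofReal (γ y x)}

/-- The symmetric bilinear form B(u,v). -/
def Bform {d : ℕ} (Ω : Set (Euc d)) (γ : Euc d → Euc d → ℝ) (u v : Euc d → ℝ) : ℝ :=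
  (1/2) * (∫ x in Ω, ∫ y in Ω, (u x - u y) * (v x - v y) * γ y x) +
    ∫ x in Ω, ∫ y in Gamma Ω γ, (u x - u y) * (v x - v y) * γ y x

/-- The nonlocal Poincaré inequality holds on V(Ω;γ). -/
def PoincareHolds {d : ℕ} (Ω : Set (Euc d)) (γ : Euc d → Euc d → ℝ) : Prop :=
  ∃ C > (0 : ℝ), ∀ v : Euc d → ℝ, memV Ω γ v →
    (∫⁻ x in Ω, ∫⁻ y in Ω, ENNReal.ofReal ((v x - v y) ^ 2)) ≤
      ENNReal.ofReal C * ∫⁻ x in Ω, ∫⁻ y, ENNReal.ofReal ((v x - v y) ^ 2 * γ y x)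

theorem ofReal_sq (a : ℝ) : ENNReal.ofReal (a ^ 2) = (‖a‖₊ : ℝ≥0∞) ^ 2 := by
  rw [← ENNReal.ofReal_coe_nnreal, coe_nnnorm, ← ENNReal.ofReal_pow (norm_nonneg a), ← norm_pow,
    Real.norm_eq_abs, abs_of_nonneg (sq_nonneg a)]

theorem sq_eLp {α : Type*} [MeasurableSpace α] (μ : Measure α) (u : α → ℝ) :
    ∫⁻ x, ENNReal.ofReal (u x ^ 2) ∂μ = eLpNorm u 2 μ ^ 2 := by
  rw [eLpNorm_eq_lintegral_rpow_enorm_toReal two_ne_zero ENNReal.ofNat_ne_top]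
  rw [← ENNReal.rpow_natCast _ 2, ← ENNReal.rpow_mul]
  norm_num
  apply lintegral_congr fun x => ?_
  rw [ofReal_sq, ← ENNReal.rpow_natCast (‖u x‖₊ : ℝ≥0∞) 2, enorm_eq_nnnorm]; norm_cast

def nu {d : ℕ} (Ω : Set (Euc d)) (γ : Euc d → Euc d → ℝ) : Measure (Euc d × Euc d) :=
  ((volume.restrict Ω).prod volume).withDensity (fun p => ENNReal.ofReal (γ p.2 p.1))

theorem gmeas {d : ℕ} {γ : Euc d → Euc d → ℝ} (hγm : Measurable (Function.uncurry γ)) :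
    Measurable (fun p : Euc d × Euc d => ENNReal.ofReal (γ p.2 p.1)) := by
  apply ENNReal.measurable_ofReal.comp
  exact hγm.comp (measurable_snd.prodMk measurable_fst)

theorem Vnorm_eq {d : ℕ} (Ω : Set (Euc d)) (γ : Euc d → Euc d → ℝ)
    (hγm : Measurable (Function.uncurry γ))
    (u : Euc d → ℝ) (hu : Measurable u) :
    Vnorm Ω γ u = eLpNorm u 2 (volume.restrict Ω) ^ 2 +
      eLpNorm (fun p : Euc d × Euc d => u p.1 - u p.2) 2 (nu Ω γ) ^ 2 := by
  have hF : Measurable (fun p : Euc d × Euc d => u p.1 - u p.2) :=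
    (hu.comp measurable_fst).sub (hu.comp measurable_snd)
  rw [Vnorm, ← sq_eLp, ← sq_eLp]
  congr 1
  rw [energy, nu]
  rw [lintegral_withDensity_eq_lintegral_mul _ (gmeas hγm)
    ((hF.pow_const 2).ennreal_ofReal)]
  simp only [Pi.mul_apply]
  rw [lintegral_prod (fun a : Euc d × Euc d => ENNReal.ofReal (γ a.2 a.1) * ENNReal.ofReal ((u a.1 - u a.2) ^ 2)) (((gmeas hγm).mul ((hF.pow_const 2).ennreal_ofReal)).aemeasurable)]
  apply lintegral_congr fun x => lintegral_congr fun y => ?_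
  rw [ENNReal.ofReal_mul (sq_nonneg _), mul_comm]

theorem sq_lt_top {x : ℝ≥0∞} (h : x ^ 2 < ⊤) : x < ⊤ := by
  rw [lt_top_iff_ne_top] at h ⊢
  intro hx
  exact h (by simp [hx])

theorem lt_of_sq_lt_sq {x y : ℝ≥0∞} (h : x ^ 2 < y ^ 2) : x < y := by
  by_contra hc
  exact absurd (pow_le_pow_left₀ zero_le (not_lt.mp hc) 2) (not_le.mpr h)

/-- general helper: a Cauchy sequence with a subsequence converging to `g` in `eLpNorm`
converges fully. -/
theorem tendsto_eLpNorm_full {α : Type*} [MeasurableSpace α] {μ : Measure α}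
    (f : ℕ → α → ℝ) (g : α → ℝ) (hf : ∀ n, AEStronglyMeasurable (f n) μ)
    (hg : AEStronglyMeasurable g μ) (φ : ℕ → ℕ) (hφ : ∀ k, k ≤ φ k)
    (hsub : Tendsto (fun k => eLpNorm (f (φ k) - g) 2 μ) atTop (𝓝 0))
    (hc : ∀ r : ℝ, 0 < r → ∃ N, ∀ m n, N ≤ m → N ≤ n →
      eLpNorm (f m - f n) 2 μ ≤ ENNReal.ofReal r) :
    Tendsto (fun n => eLpNorm (f n - g) 2 μ) atTop (𝓝 0) := by
  rw [ENNReal.tendsto_atTop_zero]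
  intro ε hε
  rcases eq_or_ne ε ⊤ with rfl | hεtop
  · exact ⟨0, fun n _ => le_top⟩
  set r : ℝ := ε.toReal with hrdef
  have hr : 0 < r := ENNReal.toReal_pos hε.ne' hεtop
  obtain ⟨N, hN⟩ := hc (r / 2) (by positivity)
  obtain ⟨K, hK⟩ := (ENNReal.tendsto_atTop_zero.mp hsub) (ENNReal.ofReal (r / 2))
    (by simp [ENNReal.ofReal_pos]; positivity)
  set k := max K N with hkdef
  refine ⟨N, fun n hn => ?_⟩
  have h1 : eLpNorm (f n - f (φ k)) 2 μ ≤ ENNReal.ofReal (r / 2) :=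
    hN n (φ k) hn (le_trans (le_trans (le_max_right K N) (hφ k)) le_rfl)
  have h2 : eLpNorm (f (φ k) - g) 2 μ ≤ ENNReal.ofReal (r / 2) := hK k (le_max_left K N)
  have hdecomp : f n - g = (f n - f (φ k)) + (f (φ k) - g) := by
    funext x; simp
  calc eLpNorm (f n - g) 2 μ
      ≤ eLpNorm (f n - f (φ k)) 2 μ + eLpNorm (f (φ k) - g) 2 μ := by
        rw [hdecomp]
        exact eLpNorm_add_le ((hf n).sub (hf (φ k))) ((hf (φ k)).sub hg) one_le_two
    _ ≤ ENNReal.ofReal (r / 2) + ENNReal.ofReal (r / 2) := add_le_add h1 h2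
    _ = ENNReal.ofReal r := by rw [← ENNReal.ofReal_add (by positivity) (by positivity)]; ring_nf
    _ ≤ ε := ENNReal.ofReal_toReal_le

/-- V(Ω;γ) is complete with respect to its seminorm. -/
theorem statement0 {d : ℕ} (Ω : Set (Euc d)) (hΩo : IsOpen Ω) (hΩne : Ω.Nonempty)
    (γ : Euc d → Euc d → ℝ) (hγm : Measurable (Function.uncurry γ)) (hγ0 : ∀ x y, 0 ≤ γ x y)
    (v : ℕ → Euc d → ℝ) (hv : ∀ n, memV Ω γ (v n))
    (hcauchy : ∀ ε : ℝ, 0 < ε → ∃ N : ℕ, ∀ m n : ℕ, N ≤ m → N ≤ n →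
      Vnorm Ω γ (fun x => v m x - v n x) < ENNReal.ofReal ε) :
    ∃ w : Euc d → ℝ, memV Ω γ w ∧
      Tendsto (fun n => Vnorm Ω γ (fun x => v n x - w x)) atTop (nhds 0) := by
  classical
  set μΩ : Measure (Euc d) := volume.restrict Ω with hμΩ
  set ν : Measure (Euc d × Euc d) := nu Ω γ with hνdef
  have hkey : ∀ u : Euc d → ℝ, Measurable u → Vnorm Ω γ u =
      eLpNorm u 2 μΩ ^ 2 + eLpNorm (fun p : Euc d × Euc d => u p.1 - u p.2) 2 ν ^ 2 :=
    fun u hu => Vnorm_eq Ω γ hγm u hu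
  have hFm : ∀ n, Measurable (fun p : Euc d × Euc d => v n p.1 - v n p.2) := fun n =>
    ((hv n).1.comp measurable_fst).sub ((hv n).1.comp measurable_snd)
  have hfin : ∀ n, eLpNorm (v n) 2 μΩ < ⊤ ∧
      eLpNorm (fun p : Euc d × Euc d => v n p.1 - v n p.2) 2 ν < ⊤ := by
    intro n
    have h := (hv n).2
    rw [hkey (v n) (hv n).1] at h
    exact ⟨sq_lt_top (lt_of_le_of_lt (le_add_right le_rfl) h),
      sq_lt_top (lt_of_le_of_lt (le_add_left le_rfl) h)⟩
  have hm1 : ∀ n, MemLp (v n) 2 μΩ := fun n => ⟨(hv n).1.aestronglyMeasurable, (hfin n).1⟩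
  have hm2 : ∀ n, MemLp (fun p : Euc d × Euc d => v n p.1 - v n p.2) 2 ν := fun n =>
    ⟨(hFm n).aestronglyMeasurable, (hfin n).2⟩
  -- translation of the Cauchy property to the two `eLpNorm`s
  have hV2 : ∀ (m n : ℕ) (r : ℝ), 0 < r →
      Vnorm Ω γ (fun x => v m x - v n x) < ENNReal.ofReal (r ^ 2) →
      eLpNorm (v m - v n) 2 μΩ < ENNReal.ofReal r ∧
      eLpNorm ((fun p : Euc d × Euc d => v m p.1 - v m p.2) -
        (fun p : Euc d × Euc d => v n p.1 - v n p.2)) 2 ν < ENNReal.ofReal r := by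
    intro m n r hr h
    have hmeas : Measurable (fun x => v m x - v n x) := (hv m).1.sub (hv n).1
    rw [hkey _ hmeas, ENNReal.ofReal_pow hr.le] at h
    refine ⟨lt_of_sq_lt_sq (lt_of_le_of_lt (le_add_right le_rfl) h), ?_⟩
    have hfeq : ((fun p : Euc d × Euc d => v m p.1 - v m p.2) -
        (fun p : Euc d × Euc d => v n p.1 - v n p.2))
        = fun p : Euc d × Euc d => (fun x => v m x - v n x) p.1 - (fun x => v m x - v n x) p.2 := by
      funext p; simp only [Pi.sub_apply]; ring
    rw [hfeq]
    exact lt_of_sq_lt_sq (lt_of_le_of_lt (le_add_left le_rfl) h)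
  -- choose the subsequence indices
  choose Nf hNfs using fun k : ℕ => hcauchy ((4 : ℝ)⁻¹ ^ (k + 1)) (by positivity)
  let φ : ℕ → ℕ := fun k => Nat.rec (Nf 0) (fun k ih => max (ih + 1) (Nf (k + 1))) k
  have hφmono : StrictMono φ := strictMono_nat_of_lt_succ fun k =>
    lt_of_lt_of_le (Nat.lt_succ_self _) (le_max_left _ _)
  have hφNf : ∀ k, Nf k ≤ φ k := by
    intro k; cases k with
    | zero => exact le_rfl
    | succ k => exact le_max_right _ _
  have hofReal : ∀ k : ℕ, ENNReal.ofReal ((2 : ℝ)⁻¹ ^ (k + 1)) = (2 : ℝ≥0∞)⁻¹ ^ (k + 1) := by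
    intro k
    rw [ENNReal.ofReal_pow (by positivity), ENNReal.ofReal_inv_of_pos (by norm_num)]
    norm_num
  have h4eq : ∀ k : ℕ, (4 : ℝ)⁻¹ ^ (k + 1) = ((2 : ℝ)⁻¹ ^ (k + 1)) ^ 2 := by
    intro k
    rw [← pow_mul, show (4 : ℝ)⁻¹ = (2 : ℝ)⁻¹ ^ 2 by norm_num, ← pow_mul]
    ring_nf
  have hcaub : ∀ K nn mm : ℕ, K ≤ nn → K ≤ mm →
      eLpNorm (v (φ nn) - v (φ mm)) 2 μΩ < (2 : ℝ≥0∞)⁻¹ ^ (K + 1) ∧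
      eLpNorm ((fun p : Euc d × Euc d => v (φ nn) p.1 - v (φ nn) p.2) -
        (fun p : Euc d × Euc d => v (φ mm) p.1 - v (φ mm) p.2)) 2 ν < (2 : ℝ≥0∞)⁻¹ ^ (K + 1) := by
    intro K nn mm hn hm
    have hVlt : Vnorm Ω γ (fun x => v (φ nn) x - v (φ mm) x) <
        ENNReal.ofReal (((2 : ℝ)⁻¹ ^ (K + 1)) ^ 2) := by
      rw [← h4eq K]
      exact hNfs K (φ nn) (φ mm) (le_trans (hφNf K) (hφmono.monotone hn))
        (le_trans (hφNf K) (hφmono.monotone hm))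
    have := hV2 (φ nn) (φ mm) ((2 : ℝ)⁻¹ ^ (K + 1)) (by positivity) hVlt
    rwa [hofReal K] at this
  have hBsum : (∑' k : ℕ, (2 : ℝ≥0∞)⁻¹ ^ (k + 1)) ≠ ⊤ := by
    refine ne_top_of_le_ne_top ?_ (ENNReal.tsum_le_tsum fun k : ℕ =>
      (by rw [pow_succ]; exact mul_le_of_le_one_right' (ENNReal.inv_le_one.mpr one_le_two) :
        (2 : ℝ≥0∞)⁻¹ ^ (k + 1) ≤ (2 : ℝ≥0∞)⁻¹ ^ k))
    simpa only [ENNReal.tsum_geometric, ENNReal.one_sub_inv_two, inv_inv] using ENNReal.ofNat_ne_top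
  -- limits in the two L² spaces
  obtain ⟨w₀, hw₀mem, hw₀t⟩ := Lp.cauchy_complete_eLpNorm (μ := μΩ) one_le_two
    (fun k => hm1 (φ k)) hBsum (fun K nn mm hn hm => (hcaub K nn mm hn hm).1)
  obtain ⟨G, hGmem, hGt⟩ := Lp.cauchy_complete_eLpNorm (μ := ν) one_le_two
    (fun k => hm2 (φ k)) hBsum (fun K nn mm hn hm => (hcaub K nn mm hn hm).2)
  -- extract a.e.-convergent subsequences
  have him1 : TendstoInMeasure μΩ (fun k => v (φ k)) atTop w₀ :=
    tendstoInMeasure_of_tendsto_eLpNorm (p := 2) two_ne_zero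
      (fun k => (hm1 (φ k)).1) hw₀mem.1 hw₀t
  obtain ⟨ns, hns, hae1⟩ := him1.exists_seq_tendsto_ae
  have hGt' : Tendsto (fun i => eLpNorm ((fun p : Euc d × Euc d =>
      v (φ (ns i)) p.1 - v (φ (ns i)) p.2) - G) 2 ν) atTop (𝓝 0) :=
    hGt.comp hns.tendsto_atTop
  have him2 : TendstoInMeasure ν
      (fun i => fun p : Euc d × Euc d => v (φ (ns i)) p.1 - v (φ (ns i)) p.2) atTop G :=
    tendstoInMeasure_of_tendsto_eLpNorm (p := 2) two_ne_zero
      (fun i => (hm2 (φ (ns i))).1) hGmem.1 hGt'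
  obtain ⟨ms, hms, hae2⟩ := him2.exists_seq_tendsto_ae
  set ψ : ℕ → ℕ := fun j => φ (ns (ms j)) with hψdef
  have hae1' : ∀ᵐ x ∂μΩ, Tendsto (fun j => v (ψ j) x) atTop (𝓝 (w₀ x)) :=
    hae1.mono fun x hx => hx.comp hms.tendsto_atTop
  have hae2' : ∀ᵐ p ∂ν, Tendsto (fun j => v (ψ j) p.1 - v (ψ j) p.2) atTop (𝓝 (G p)) := hae2
  -- the limit function
  set w : Euc d → ℝ := fun x => limsup (fun j => v (ψ j) x) atTop with hwdef
  have hwmeas : Measurable w := Measurable.limsup fun j => (hv (ψ j)).1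
  have hw1 : w =ᵐ[μΩ] w₀ := hae1'.mono fun x hx => hx.limsup_eq
  -- transfer the μΩ-null convergence set to ν
  obtain ⟨T, hST, hTm, hT0⟩ := exists_measurable_superset_of_null (ae_iff.mp hae1')
  have hνT : ν (Prod.fst ⁻¹' T) = 0 := by
    have hTprod : Prod.fst ⁻¹' T = T ×ˢ (Set.univ : Set (Euc d)) := by
      ext p; simp [Set.mem_prod]
    rw [hνdef, nu, hTprod, withDensity_apply _ (hTm.prod MeasurableSet.univ),
      ← Measure.prod_restrict, Measure.restrict_univ,
      Measure.restrict_eq_zero.mpr hT0, Measure.zero_prod, lintegral_zero_measure]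
  have hae3 : ∀ᵐ p : Euc d × Euc d ∂ν, Tendsto (fun j => v (ψ j) p.1) atTop (𝓝 (w₀ p.1)) := by
    have hTn : ∀ᵐ p : Euc d × Euc d ∂ν, p.1 ∉ T := by
      rw [ae_iff]
      refine measure_mono_null (fun p hp => ?_) hνT
      simpa using hp
    filter_upwards [hTn] with p hp
    by_contra hcon
    exact hp (hST hcon)
  have hw2 : ∀ᵐ p : Euc d × Euc d ∂ν, w p.1 - w p.2 = G p := by
    filter_upwards [hae2', hae3] with p h2 h1
    have hlim2 : Tendsto (fun j => v (ψ j) p.2) atTop (𝓝 (w₀ p.1 - G p)) := by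
      have := h1.sub h2
      simpa using this
    have e1 : w p.1 = w₀ p.1 := h1.limsup_eq
    have e2 : w p.2 = w₀ p.1 - G p := hlim2.limsup_eq
    rw [e1, e2]; ring
  -- membership of w
  have hwL2 : eLpNorm w 2 μΩ < ⊤ := by
    rw [eLpNorm_congr_ae hw1]; exact hw₀mem.2
  have hFweq : (fun p : Euc d × Euc d => w p.1 - w p.2) =ᵐ[ν] G := hw2
  have hFwL2 : eLpNorm (fun p : Euc d × Euc d => w p.1 - w p.2) 2 ν < ⊤ := by
    rw [eLpNorm_congr_ae hFweq]; exact hGmem.2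
  have hwmem : memV Ω γ w := by
    refine ⟨hwmeas, ?_⟩
    rw [hkey w hwmeas]
    exact ENNReal.add_lt_top.mpr ⟨ENNReal.pow_lt_top hwL2, ENNReal.pow_lt_top hFwL2⟩
  refine ⟨w, hwmem, ?_⟩
  -- full convergence of the two components
  have ht1 : Tendsto (fun n => eLpNorm (v n - w) 2 μΩ) atTop (𝓝 0) := by
    refine tendsto_eLpNorm_full v w (fun n => (hm1 n).1) hwmeas.aestronglyMeasurable φ
      (fun k => hφmono.le_apply) ?_ ?_
    · have heq : ∀ k, eLpNorm (v (φ k) - w) 2 μΩ = eLpNorm (v (φ k) - w₀) 2 μΩ := fun k =>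
        eLpNorm_congr_ae (EventuallyEq.sub (EventuallyEq.refl _ _) hw1)
      simpa only [heq] using hw₀t
    · intro r hr
      obtain ⟨N, hN⟩ := hcauchy (r ^ 2) (by positivity)
      exact ⟨N, fun m n hm hn => ((hV2 m n r hr (hN m n hm hn)).1).le⟩
  have ht2 : Tendsto (fun n => eLpNorm ((fun p : Euc d × Euc d => v n p.1 - v n p.2) -
      (fun p : Euc d × Euc d => w p.1 - w p.2)) 2 ν) atTop (𝓝 0) := by
    refine tendsto_eLpNorm_full (fun n => fun p : Euc d × Euc d => v n p.1 - v n p.2)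
      (fun p : Euc d × Euc d => w p.1 - w p.2) (fun n => (hm2 n).1)
      (((hwmeas.comp measurable_fst).sub (hwmeas.comp measurable_snd)).aestronglyMeasurable) φ
      (fun k => hφmono.le_apply) ?_ ?_
    · have heq : ∀ k, eLpNorm ((fun p : Euc d × Euc d => v (φ k) p.1 - v (φ k) p.2) -
          (fun p : Euc d × Euc d => w p.1 - w p.2)) 2 ν =
          eLpNorm ((fun p : Euc d × Euc d => v (φ k) p.1 - v (φ k) p.2) - G) 2 ν := fun k =>
        eLpNorm_congr_ae (EventuallyEq.sub (EventuallyEq.refl _ _) hFweq)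
      simpa only [heq] using hGt
    · intro r hr
      obtain ⟨N, hN⟩ := hcauchy (r ^ 2) (by positivity)
      exact ⟨N, fun m n hm hn => ((hV2 m n r hr (hN m n hm hn)).2).le⟩
  -- conclude
  have hVeq : ∀ n, Vnorm Ω γ (fun x => v n x - w x) =
      eLpNorm (v n - w) 2 μΩ ^ 2 +
      eLpNorm ((fun p : Euc d × Euc d => v n p.1 - v n p.2) -
        (fun p : Euc d × Euc d => w p.1 - w p.2)) 2 ν ^ 2 := by
    intro n
    rw [hkey (fun x => v n x - w x) ((hv n).1.sub hwmeas)]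
    have hfe : (fun p : Euc d × Euc d => (fun x => v n x - w x) p.1 - (fun x => v n x - w x) p.2)
        = ((fun p : Euc d × Euc d => v n p.1 - v n p.2) -
          fun p : Euc d × Euc d => w p.1 - w p.2) := by
      funext p; simp only [Pi.sub_apply]; ring
    rw [hfe]
    rfl
  have hfinal := (((ENNReal.continuous_pow 2).continuousAt.tendsto.comp ht1).add
    ((ENNReal.continuous_pow 2).continuousAt.tendsto.comp ht2))
  simp only [Function.comp_def] at hfinal
  norm_num at hfinal
  simpa only [hVeq] using hfinal
end
end

section
/- Nonlocal integration by parts: under the stated integrability hypotheses, for all v ∈ V(Ω; γ̃) one has ∫_Ω (Lu)(x) v(x) dx + ∫_{Γ̂} (Nu)(y) v(y) dy = (1/2)∫_Ω∫_Ω (u(x)γ(x,y) − u(y)γ(y,x))(v(x)−v(y)) dy dx + ∫_Ω∫_{Γ̂} (u(x)γ(x,y) − u(y)γ(y,x))(v(x)−v(y)) dy dx. In particular, taking v ≡ 1, ∫_Ω −(Lu)(x) dx = ∫_{Γ̂} (Nu)(y) dy. -/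
open MeasureTheory ENNReal Filter

noncomputable section

/-- The nonlocal boundary Γ̂ = {y ∉ Ω : ∫_Ω γ(y,x)+γ(x,y) dx > 0}. -/
def GammaHat {d : ℕ} (Ω : Set (Euc d)) (γ : Euc d → Euc d → ℝ) : Set (Euc d) :=
  {y | y ∉ Ω ∧ 0 < ∫⁻ x in Ω, ENNReal.ofReal (γ y x + γ x y)}

lemma amgm (a b c kk : ℝ) (hk : 0 < kk) : |a * b * c| ≤ a^2 * kk / 2 + c^2 * (b^2 / kk) / 2 := by
  rw [abs_mul, abs_mul, ← sub_nonneg]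
  have h : a^2 * kk / 2 + c^2 * (b^2/kk) / 2 - |a| * |b| * |c|
      = (a^2 * kk * kk + c^2 * b^2 - 2 * kk * (|a| * |b| * |c|)) / (2 * kk) := by
    field_simp
  rw [h]
  apply div_nonneg _ (by positivity)
  have h2 : 0 ≤ (|a| * kk - |b| * |c|)^2 := sq_nonneg _
  have h3 : (|a| * kk - |b| * |c|)^2
      = a^2 * kk * kk + c^2 * b^2 - 2 * kk * (|a| * |b| * |c|) := by
    rw [sub_sq, mul_pow, mul_pow, sq_abs, sq_abs, sq_abs]; ring
  linarith

lemma ptbound (ux uy vx vy gxy gyx kk : ℝ) (h1 : 0 ≤ gyx) (hk : 0 < kk) :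
    |(ux * gxy - uy * gyx) * (vx - vy)| ≤
      (ux - uy)^2 * max gyx ((gxy - gyx)^2 / kk) + (vx - vy)^2 * max gyx ((gxy - gyx)^2 / kk)
        + ux^2 * kk := by
  set m := max gyx ((gxy - gyx)^2 / kk) with hm
  have hm1 : gyx ≤ m := le_max_left _ _
  have hm2 : (gxy - gyx)^2 / kk ≤ m := le_max_right _ _
  have hm0 : 0 ≤ m := le_trans h1 hm1
  have e0 : (ux * gxy - uy * gyx) * (vx - vy)
      = ((ux - uy) * (vx - vy)) * gyx + ux * (gxy - gyx) * (vx - vy) := by ring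
  have habs : |(ux * gxy - uy * gyx) * (vx - vy)| ≤
      |((ux - uy) * (vx - vy)) * gyx| + |ux * (gxy - gyx) * (vx - vy)| := by
    rw [e0]; exact abs_add_le _ _
  have p1 : |((ux - uy) * (vx - vy)) * gyx| ≤ ((ux - uy)^2/2 + (vx - vy)^2/2) * gyx := by
    rw [abs_mul, abs_of_nonneg h1]
    apply mul_le_mul_of_nonneg_right _ h1
    rw [abs_mul]
    nlinarith [sq_nonneg (|ux - uy| - |vx - vy|), sq_abs (ux - uy), sq_abs (vx - vy),
      abs_nonneg (ux - uy), abs_nonneg (vx - vy)]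
  have p2 := amgm ux (gxy - gyx) (vx - vy) kk hk
  have q1 : ((ux - uy)^2/2 + (vx - vy)^2/2) * gyx ≤ ((ux - uy)^2/2 + (vx - vy)^2/2) * m :=
    mul_le_mul_of_nonneg_left hm1 (by positivity)
  have q2 : (vx - vy)^2 * ((gxy - gyx)^2 / kk) / 2 ≤ (vx - vy)^2 * m / 2 := by
    have := mul_le_mul_of_nonneg_left hm2 (sq_nonneg (vx - vy))
    linarith
  nlinarith [sq_nonneg (ux - uy), sq_nonneg (vx - vy), sq_nonneg ux, hk.le]

lemma ibp_aux {d : ℕ} (Ω Γ : Set (Euc d)) (hΩm : MeasurableSet Ω) (hΓm : MeasurableSet Γ)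
    (hdisj : Disjoint Ω Γ)
    (F : Euc d → Euc d → ℝ)
    (hanti : ∀ x y, F y x = - F x y)
    (v : Euc d → ℝ)
    (hFull : ∀ᵐ x ∂(volume.restrict Ω), Integrable (F x))
    (hW : ∀ᵐ x ∂(volume.restrict Ω), ∫ y in (Ω ∪ Γ)ᶜ, F x y = 0)
    (hI1 : Integrable (fun p : Euc d × Euc d => F p.1 p.2 * v p.1)
      ((volume.restrict Ω).prod volume))
    (hI2 : Integrable (fun p : Euc d × Euc d => F p.1 p.2 * (v p.1 - v p.2))
      ((volume.restrict Ω).prod (volume.restrict Γ))) :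
    (∫ x in Ω, (∫ y, F x y) * v x) + (∫ y in Γ, (∫ x in Ω, - F x y) * v y)
      = (1/2) * (∫ x in Ω, ∫ y in Ω, F x y * (v x - v y)) +
          ∫ x in Ω, ∫ y in Γ, F x y * (v x - v y) := by
  set μ := volume.restrict Ω with hμ
  set ν := volume.restrict Γ with hν
  have hres : ∀ T : Set (Euc d), Integrable (fun p : Euc d × Euc d => F p.1 p.2 * v p.1)
      (μ.prod (volume.restrict T)) := by
    intro T
    have h2 : μ.prod (volume.restrict T) = (μ.prod volume).restrict (Set.univ ×ˢ T) := by
      rw [← Measure.prod_restrict, Measure.restrict_univ]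
    rw [h2]
    exact hI1.integrableOn
  have hI1Ω : Integrable (fun p : Euc d × Euc d => F p.1 p.2 * v p.1) (μ.prod μ) := hres Ω
  have hI1Γ : Integrable (fun p : Euc d × Euc d => F p.1 p.2 * v p.1) (μ.prod ν) := hres Γ
  have hI3 : Integrable (fun p : Euc d × Euc d => F p.1 p.2 * v p.2) (μ.prod ν) := by
    have h := hI1Γ.sub hI2
    have he : ((fun p : Euc d × Euc d => F p.1 p.2 * v p.1)
          - fun p : Euc d × Euc d => F p.1 p.2 * (v p.1 - v p.2))
        = fun p : Euc d × Euc d => F p.1 p.2 * v p.2 := by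
      funext p; simp only [Pi.sub_apply]; ring
    rwa [he] at h
  have hI4 : Integrable (fun p : Euc d × Euc d => F p.1 p.2 * v p.2) (μ.prod μ) := by
    have h := (hI1Ω.neg).swap
    have he : ((-fun p : Euc d × Euc d => F p.1 p.2 * v p.1) ∘ Prod.swap)
        = fun p : Euc d × Euc d => F p.1 p.2 * v p.2 := by
      funext p
      simp [Function.comp, hanti p.1 p.2]
    rwa [he] at h
  have hI2Ω : Integrable (fun p : Euc d × Euc d => F p.1 p.2 * (v p.1 - v p.2)) (μ.prod μ) := by
    have h := hI1Ω.sub hI4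
    have he : ((fun p : Euc d × Euc d => F p.1 p.2 * v p.1)
          - fun p : Euc d × Euc d => F p.1 p.2 * v p.2)
        = fun p : Euc d × Euc d => F p.1 p.2 * (v p.1 - v p.2) := by
      funext p; simp only [Pi.sub_apply]; ring
    rwa [he] at h
  set A1 := ∫ p : Euc d × Euc d, F p.1 p.2 * v p.1 ∂(μ.prod μ) with hA1
  set A2 := ∫ p : Euc d × Euc d, F p.1 p.2 * v p.1 ∂(μ.prod ν) with hA2
  set A3 := ∫ p : Euc d × Euc d, F p.1 p.2 * v p.2 ∂(μ.prod ν) with hA3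
  set A4 := ∫ p : Euc d × Euc d, F p.1 p.2 * v p.2 ∂(μ.prod μ) with hA4
  have hA4eq : A4 = -A1 := by
    have h := integral_prod_swap (μ := μ) (ν := μ)
      (fun p : Euc d × Euc d => F p.1 p.2 * v p.2)
    simp only [Prod.fst_swap, Prod.snd_swap] at h
    have he2 : (fun z : Euc d × Euc d => F z.2 z.1 * v z.1)
        = fun z : Euc d × Euc d => -(F z.1 z.2 * v z.1) := by
      funext z; rw [hanti z.1 z.2]; ring
    rw [he2, integral_neg] at h
    rw [hA4, hA1, ← h]
  have h1 : ∫ x in Ω, (∫ y, F x y) * v x = A1 + A2 := by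
    have step1 : ∫ x in Ω, (∫ y, F x y) * v x
        = ∫ x, ((∫ y, F x y * v x ∂μ) + ∫ y, F x y * v x ∂ν) ∂μ := by
      apply integral_congr_ae
      filter_upwards [hFull, hW] with x hx hx0
      rw [← integral_add_compl (hΩm.union hΓm) hx,
        setIntegral_union hdisj hΓm hx.integrableOn hx.integrableOn, hx0, add_zero,
        add_mul, integral_mul_const, integral_mul_const]
    have J1 : Integrable (fun x => ∫ y, F x y * v x ∂μ) μ := by
      have := hI1Ω.integral_prod_left
      simpa using this
    have J2 : Integrable (fun x => ∫ y, F x y * v x ∂ν) μ := by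
      have := hI1Γ.integral_prod_left
      simpa using this
    rw [step1, integral_add J1 J2, integral_integral hI1Ω, integral_integral hI1Γ]
  have h2 : ∫ y in Γ, (∫ x in Ω, - F x y) * v y = -A3 := by
    have step1 : ∀ y, (∫ x in Ω, - F x y) * v y = -(∫ x, F x y * v y ∂μ) := by
      intro y
      rw [integral_neg, neg_mul, integral_mul_const]
    simp only [step1]
    rw [integral_neg, ← integral_integral_swap hI3, integral_integral hI3]
  have h3 : ∫ x in Ω, ∫ y in Ω, F x y * (v x - v y) = A1 - A4 := by
    rw [integral_integral hI2Ω]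
    have he : (fun z : Euc d × Euc d => F z.1 z.2 * (v z.1 - v z.2))
        = fun z : Euc d × Euc d => F z.1 z.2 * v z.1 - F z.1 z.2 * v z.2 := by
      funext z; ring
    rw [he, integral_sub hI1Ω hI4]
  have h4 : ∫ x in Ω, ∫ y in Γ, F x y * (v x - v y) = A2 - A3 := by
    rw [integral_integral hI2]
    have he : (fun z : Euc d × Euc d => F z.1 z.2 * (v z.1 - v z.2))
        = fun z : Euc d × Euc d => F z.1 z.2 * v z.1 - F z.1 z.2 * v z.2 := by
      funext z; ring
    rw [he, integral_sub hI1Γ hI3]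
  rw [h1, h2, h3, h4, hA4eq]
  ring

/-- nonlocal integration by parts, with the special case v ≡ 1. -/
theorem statement3 {d : ℕ} (Ω : Set (Euc d)) (hΩo : IsOpen Ω) (hΩb : Bornology.IsBounded Ω)
    (γ k : Euc d → Euc d → ℝ)
    (hγm : Measurable (Function.uncurry γ)) (hγ0 : ∀ x y, 0 ≤ γ x y)
    (hkm : Measurable (Function.uncurry k)) (hkpos : ∀ y x, 0 < k y x)
    (hkM : ∃ M : ℝ, ∀ᵐ x ∂(volume.restrict Ω),
      (∫⁻ y, ENNReal.ofReal (k y x)) ≤ ENNReal.ofReal M)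
    (u : Euc d → ℝ)
    (hu : memV Ω (fun y x => max (γ y x) ((γ x y - γ y x) ^ 2 / k y x)) u)
    (hint : (∫⁻ x in Ω, (∫⁻ y, ENNReal.ofReal |u x * γ x y - u y * γ y x|) ^ 2) < ⊤) :
    (∀ v : Euc d → ℝ, memV Ω (fun y x => max (γ y x) ((γ x y - γ y x) ^ 2 / k y x)) v →
      (∫ x in Ω, (∫ y, (u x * γ x y - u y * γ y x)) * v x) +
        (∫ y in GammaHat Ω γ, (∫ x in Ω, (u y * γ y x - u x * γ x y)) * v y)
      = (1/2) * (∫ x in Ω, ∫ y in Ω, (u x * γ x y - u y * γ y x) * (v x - v y)) +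
          ∫ x in Ω, ∫ y in GammaHat Ω γ, (u x * γ x y - u y * γ y x) * (v x - v y)) ∧
    ((∫ x in Ω, -(∫ y, (u x * γ x y - u y * γ y x))) =
      ∫ y in GammaHat Ω γ, ∫ x in Ω, (u y * γ y x - u x * γ x y)) := by
  obtain ⟨hum, huV⟩ := hu
  obtain ⟨M, hM⟩ := hkM
  have hΩm : MeasurableSet Ω := hΩo.measurableSet
  -- measurability
  have hγ1 : Measurable fun p : Euc d × Euc d => γ p.1 p.2 := hγm
  have hγswap : Measurable fun p : Euc d × Euc d => γ p.2 p.1 := hγm.comp measurable_swap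
  have hkswap : Measurable fun p : Euc d × Euc d => k p.2 p.1 := hkm.comp measurable_swap
  have hFm : Measurable fun p : Euc d × Euc d => u p.1 * γ p.1 p.2 - u p.2 * γ p.2 p.1 :=
    ((hum.comp measurable_fst).mul hγ1).sub ((hum.comp measurable_snd).mul hγswap)
  have hγtm : Measurable fun p : Euc d × Euc d =>
      max (γ p.2 p.1) ((γ p.1 p.2 - γ p.2 p.1) ^ 2 / k p.2 p.1) :=
    hγswap.max (((hγ1.sub hγswap).pow_const 2).div hkswap)
  have hHm : Measurable fun y => ∫⁻ x in Ω, ENNReal.ofReal (γ y x + γ x y) :=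
    Measurable.lintegral_prod_right ((hγ1.add hγswap).ennreal_ofReal)
  have hΓm : MeasurableSet (GammaHat Ω γ) := by
    have he : GammaHat Ω γ
        = Ωᶜ ∩ {y | 0 < ∫⁻ x in Ω, ENNReal.ofReal (γ y x + γ x y)} := rfl
    rw [he]
    exact hΩm.compl.inter (measurableSet_lt measurable_const hHm)
  have hdisj : Disjoint Ω (GammaHat Ω γ) :=
    Set.disjoint_left.mpr fun a ha hga => hga.1 ha
  have hanti : ∀ x y : Euc d,
      (u y * γ y x - u x * γ x y) = -(u x * γ x y - u y * γ y x) := fun x y => by ring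
  -- finiteness from memV u
  unfold Vnorm energy at huV
  have hL2u : (∫⁻ x in Ω, ENNReal.ofReal (u x ^ 2)) < ⊤ := le_self_add.trans_lt huV
  have hEu : (∫⁻ x in Ω, ∫⁻ y, ENNReal.ofReal
      ((u x - u y) ^ 2 * max (γ y x) ((γ x y - γ y x) ^ 2 / k y x))) < ⊤ :=
    le_add_self.trans_lt huV
  -- integrability of F x for a.e. x
  have hGm : Measurable fun x => ∫⁻ y, ENNReal.ofReal |u x * γ x y - u y * γ y x| :=
    Measurable.lintegral_prod_right (hFm.abs.ennreal_ofReal)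
  have hGfin : ∀ᵐ x ∂(volume.restrict Ω),
      (∫⁻ y, ENNReal.ofReal |u x * γ x y - u y * γ y x|) < ⊤ := by
    have h2 := ae_lt_top (hGm.pow_const 2) hint.ne
    filter_upwards [h2] with x hx
    rw [lt_top_iff_ne_top] at hx ⊢
    intro h; exact hx (by rw [h]; simp)
  have hFull : ∀ᵐ x ∂(volume.restrict Ω),
      Integrable (fun y => u x * γ x y - u y * γ y x) := by
    filter_upwards [hGfin] with x hx
    refine ⟨?_, ?_⟩
    · exact ((measurable_const.mul (hγm.comp measurable_prodMk_left)).sub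
        (hum.mul (hγm.comp measurable_prodMk_right))).aestronglyMeasurable
    · rw [hasFiniteIntegral_iff_norm]
      simpa [Real.norm_eq_abs] using hx
  -- vanishing outside Ω ∪ Γ̂
  have hWm : MeasurableSet ((Ω ∪ GammaHat Ω γ)ᶜ) := (hΩm.union hΓm).compl
  have hzero : ∫⁻ x in Ω, ∫⁻ y in (Ω ∪ GammaHat Ω γ)ᶜ,
      ENNReal.ofReal |u x * γ x y - u y * γ y x| = 0 := by
    rw [lintegral_lintegral_swap (hFm.abs.ennreal_ofReal).aemeasurable]
    have hy0 : ∀ y ∈ (Ω ∪ GammaHat Ω γ)ᶜ,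
        (∫⁻ x in Ω, ENNReal.ofReal |u x * γ x y - u y * γ y x|) = 0 := by
      intro y hy
      simp only [Set.mem_compl_iff, Set.mem_union] at hy
      push_neg at hy
      obtain ⟨hyΩ, hyΓ⟩ := hy
      have hH0 : (∫⁻ x in Ω, ENNReal.ofReal (γ y x + γ x y)) = 0 := by
        by_contra h
        exact hyΓ ⟨hyΩ, pos_iff_ne_zero.mpr h⟩
      have hmeas : Measurable fun x => ENNReal.ofReal (γ y x + γ x y) :=
        ((hγm.comp measurable_prodMk_left).add
          (hγm.comp measurable_prodMk_right)).ennreal_ofReal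
      have h0 := (lintegral_eq_zero_iff hmeas).mp hH0
      have hcongr : (fun x => ENNReal.ofReal |u x * γ x y - u y * γ y x|)
          =ᵐ[volume.restrict Ω] 0 := by
        filter_upwards [h0] with x hx
        have hx' : γ y x + γ x y ≤ 0 := ENNReal.ofReal_eq_zero.mp hx
        have h1 : γ y x = 0 := by linarith [hγ0 y x, hγ0 x y]
        have h2 : γ x y = 0 := by linarith [hγ0 y x, hγ0 x y]
        simp [h1, h2]
      rw [lintegral_congr_ae hcongr]; simp
    have hEq : (fun y => ∫⁻ x in Ω, ENNReal.ofReal |u x * γ x y - u y * γ y x|)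
        =ᵐ[volume.restrict ((Ω ∪ GammaHat Ω γ)ᶜ)] (fun _ => 0) := by
      filter_upwards [ae_restrict_mem hWm] with y hy
      exact hy0 y hy
    rw [lintegral_congr_ae hEq]; simp
  have hWint0 : ∀ᵐ x ∂(volume.restrict Ω),
      (∫⁻ y in (Ω ∪ GammaHat Ω γ)ᶜ,
        ENNReal.ofReal |u x * γ x y - u y * γ y x|) = 0 := by
    have hm : Measurable fun x => ∫⁻ y in (Ω ∪ GammaHat Ω γ)ᶜ,
        ENNReal.ofReal |u x * γ x y - u y * γ y x| :=
      Measurable.lintegral_prod_right (hFm.abs.ennreal_ofReal)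
    exact (lintegral_eq_zero_iff hm).mp hzero
  have hW : ∀ᵐ x ∂(volume.restrict Ω),
      ∫ y in (Ω ∪ GammaHat Ω γ)ᶜ, (u x * γ x y - u y * γ y x) = 0 := by
    filter_upwards [hWint0] with x hx
    have hmx : Measurable fun y => ENNReal.ofReal |u x * γ x y - u y * γ y x| :=
      (((measurable_const.mul (hγm.comp measurable_prodMk_left)).sub
        (hum.mul (hγm.comp measurable_prodMk_right))).abs).ennreal_ofReal
    have h0 := (lintegral_eq_zero_iff hmx).mp hx
    have hcongr : (fun y => u x * γ x y - u y * γ y x)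
        =ᵐ[volume.restrict ((Ω ∪ GammaHat Ω γ)ᶜ)] 0 := by
      filter_upwards [h0] with y hy
      have h1 : |u x * γ x y - u y * γ y x| ≤ 0 := ENNReal.ofReal_eq_zero.mp hy
      exact abs_eq_zero.mp (le_antisymm h1 (abs_nonneg _))
    exact integral_eq_zero_of_ae hcongr
  -- main statement for arbitrary v
  have key : ∀ v : Euc d → ℝ, memV Ω (fun y x => max (γ y x) ((γ x y - γ y x) ^ 2 / k y x)) v →
      (∫ x in Ω, (∫ y, (u x * γ x y - u y * γ y x)) * v x) +
        (∫ y in GammaHat Ω γ, (∫ x in Ω, (u y * γ y x - u x * γ x y)) * v y)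
      = (1/2) * (∫ x in Ω, ∫ y in Ω, (u x * γ x y - u y * γ y x) * (v x - v y)) +
          ∫ x in Ω, ∫ y in GammaHat Ω γ, (u x * γ x y - u y * γ y x) * (v x - v y) := by
    intro v hv
    obtain ⟨hvm, hvV⟩ := hv
    unfold Vnorm energy at hvV
    have hL2v : (∫⁻ x in Ω, ENNReal.ofReal (v x ^ 2)) < ⊤ := le_self_add.trans_lt hvV
    have hEv : (∫⁻ x in Ω, ∫⁻ y, ENNReal.ofReal
        ((v x - v y) ^ 2 * max (γ y x) ((γ x y - γ y x) ^ 2 / k y x))) < ⊤ :=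
      le_add_self.trans_lt hvV
    have hrpow : ∀ (mz : Measure (Euc d)) (f : Euc d → ℝ≥0∞),
        (∫⁻ x, f x ^ (2:ℝ) ∂mz) = ∫⁻ x, f x ^ (2:ℕ) ∂mz := by
      intro mz f
      apply lintegral_congr; intro x
      rw [← ENNReal.rpow_natCast]; norm_num
    have hmul1 : Measurable fun p : Euc d × Euc d =>
        (u p.1 * γ p.1 p.2 - u p.2 * γ p.2 p.1) * v p.1 :=
      hFm.mul (hvm.comp measurable_fst)
    have hmul2 : Measurable fun p : Euc d × Euc d =>
        (u p.1 * γ p.1 p.2 - u p.2 * γ p.2 p.1) * (v p.1 - v p.2) :=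
      hFm.mul ((hvm.comp measurable_fst).sub (hvm.comp measurable_snd))
    -- Integrability of F(x,y) v(x) on Ω × ℝᵈ
    have hI1 : Integrable
        (fun p : Euc d × Euc d => (u p.1 * γ p.1 p.2 - u p.2 * γ p.2 p.1) * v p.1)
        ((volume.restrict Ω).prod volume) := by
      refine ⟨hmul1.aestronglyMeasurable, ?_⟩
      rw [hasFiniteIntegral_iff_norm]
      have heq : (∫⁻ p : Euc d × Euc d,
            ENNReal.ofReal ‖(u p.1 * γ p.1 p.2 - u p.2 * γ p.2 p.1) * v p.1‖
            ∂((volume.restrict Ω).prod volume))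
          = ∫⁻ x in Ω, (∫⁻ y, ENNReal.ofReal |u x * γ x y - u y * γ y x|)
              * ENNReal.ofReal |v x| := by
        rw [lintegral_prod _ (hmul1.norm.ennreal_ofReal).aemeasurable]
        apply lintegral_congr; intro x
        calc (∫⁻ y, ENNReal.ofReal ‖(u x * γ x y - u y * γ y x) * v x‖)
            = ∫⁻ y, ENNReal.ofReal |u x * γ x y - u y * γ y x| * ENNReal.ofReal |v x| := by
              apply lintegral_congr; intro y
              rw [Real.norm_eq_abs, abs_mul, ENNReal.ofReal_mul (abs_nonneg _)]
          _ = (∫⁻ y, ENNReal.ofReal |u x * γ x y - u y * γ y x|) * ENNReal.ofReal |v x| :=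
              lintegral_mul_const' _ _ ENNReal.ofReal_ne_top
      rw [heq]
      have p22 : Real.HolderConjugate 2 2 := Real.HolderConjugate.two_two
      have hH := ENNReal.lintegral_mul_le_Lp_mul_Lq (volume.restrict Ω) p22
        hGm.aemeasurable (hvm.abs.ennreal_ofReal).aemeasurable
      refine lt_of_le_of_lt (le_trans (le_of_eq ?_) hH) ?_
      · apply lintegral_congr; intro x; rfl
      · apply ENNReal.mul_lt_top
        · rw [one_div]
          apply ENNReal.rpow_lt_top_of_nonneg (by norm_num)
          rw [hrpow]
          exact hint.ne
        · rw [one_div]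
          apply ENNReal.rpow_lt_top_of_nonneg (by norm_num)
          rw [hrpow]
          have : (∫⁻ x in Ω, ENNReal.ofReal |v x| ^ (2:ℕ))
              = ∫⁻ x in Ω, ENNReal.ofReal (v x ^ 2) := by
            apply lintegral_congr; intro x
            rw [← ENNReal.ofReal_pow (abs_nonneg _), sq_abs]
          rw [this]
          exact hL2v.ne
    -- Integrability of F(x,y)(v(x)-v(y)) on Ω × ℝᵈ via the k-trick
    have hI2' : Integrable
        (fun p : Euc d × Euc d =>
          (u p.1 * γ p.1 p.2 - u p.2 * γ p.2 p.1) * (v p.1 - v p.2))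
        ((volume.restrict Ω).prod volume) := by
      refine ⟨hmul2.aestronglyMeasurable, ?_⟩
      rw [hasFiniteIntegral_iff_norm]
      have me1 : Measurable fun p : Euc d × Euc d =>
          ENNReal.ofReal ((u p.1 - u p.2) ^ 2
            * max (γ p.2 p.1) ((γ p.1 p.2 - γ p.2 p.1) ^ 2 / k p.2 p.1)) :=
        ((((hum.comp measurable_fst).sub (hum.comp measurable_snd)).pow_const 2).mul
          hγtm).ennreal_ofReal
      have me2 : Measurable fun p : Euc d × Euc d =>
          ENNReal.ofReal ((v p.1 - v p.2) ^ 2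
            * max (γ p.2 p.1) ((γ p.1 p.2 - γ p.2 p.1) ^ 2 / k p.2 p.1)) :=
        ((((hvm.comp measurable_fst).sub (hvm.comp measurable_snd)).pow_const 2).mul
          hγtm).ennreal_ofReal
      have me3 : Measurable fun p : Euc d × Euc d =>
          ENNReal.ofReal (u p.1 ^ 2 * k p.2 p.1) :=
        (((hum.comp measurable_fst).pow_const 2).mul hkswap).ennreal_ofReal
      have hbound : ∀ p : Euc d × Euc d,
          ENNReal.ofReal ‖(u p.1 * γ p.1 p.2 - u p.2 * γ p.2 p.1) * (v p.1 - v p.2)‖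
          ≤ ENNReal.ofReal ((u p.1 - u p.2) ^ 2
              * max (γ p.2 p.1) ((γ p.1 p.2 - γ p.2 p.1) ^ 2 / k p.2 p.1))
            + ENNReal.ofReal ((v p.1 - v p.2) ^ 2
              * max (γ p.2 p.1) ((γ p.1 p.2 - γ p.2 p.1) ^ 2 / k p.2 p.1))
            + ENNReal.ofReal (u p.1 ^ 2 * k p.2 p.1) := by
        intro p
        have hγtnn : 0 ≤ max (γ p.2 p.1) ((γ p.1 p.2 - γ p.2 p.1) ^ 2 / k p.2 p.1) :=
          le_trans (hγ0 p.2 p.1) (le_max_left _ _)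
        have hpt := ptbound (u p.1) (u p.2) (v p.1) (v p.2) (γ p.1 p.2) (γ p.2 p.1)
          (k p.2 p.1) (hγ0 p.2 p.1) (hkpos p.2 p.1)
        refine le_trans (ENNReal.ofReal_le_ofReal ?_)
          (le_trans ENNReal.ofReal_add_le (add_le_add ENNReal.ofReal_add_le le_rfl))
        rw [Real.norm_eq_abs]
        exact hpt
      calc (∫⁻ p : Euc d × Euc d,
            ENNReal.ofReal ‖(u p.1 * γ p.1 p.2 - u p.2 * γ p.2 p.1) * (v p.1 - v p.2)‖
            ∂((volume.restrict Ω).prod volume))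
          ≤ ∫⁻ p : Euc d × Euc d,
            (ENNReal.ofReal ((u p.1 - u p.2) ^ 2
              * max (γ p.2 p.1) ((γ p.1 p.2 - γ p.2 p.1) ^ 2 / k p.2 p.1))
            + ENNReal.ofReal ((v p.1 - v p.2) ^ 2
              * max (γ p.2 p.1) ((γ p.1 p.2 - γ p.2 p.1) ^ 2 / k p.2 p.1))
            + ENNReal.ofReal (u p.1 ^ 2 * k p.2 p.1))
            ∂((volume.restrict Ω).prod volume) := lintegral_mono hbound
        _ < ⊤ := by
            rw [lintegral_add_right _ me3, lintegral_add_right _ me2]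
            have T1 : (∫⁻ p : Euc d × Euc d,
                ENNReal.ofReal ((u p.1 - u p.2) ^ 2
                  * max (γ p.2 p.1) ((γ p.1 p.2 - γ p.2 p.1) ^ 2 / k p.2 p.1))
                ∂((volume.restrict Ω).prod volume)) < ⊤ := by
              rw [lintegral_prod _ me1.aemeasurable]
              exact hEu
            have T2 : (∫⁻ p : Euc d × Euc d,
                ENNReal.ofReal ((v p.1 - v p.2) ^ 2
                  * max (γ p.2 p.1) ((γ p.1 p.2 - γ p.2 p.1) ^ 2 / k p.2 p.1))
                ∂((volume.restrict Ω).prod volume)) < ⊤ := by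
              rw [lintegral_prod _ me2.aemeasurable]
              exact hEv
            have T3 : (∫⁻ p : Euc d × Euc d,
                ENNReal.ofReal (u p.1 ^ 2 * k p.2 p.1)
                ∂((volume.restrict Ω).prod volume)) < ⊤ := by
              rw [lintegral_prod _ me3.aemeasurable]
              have heq : (∫⁻ x in Ω, ∫⁻ y, ENNReal.ofReal (u x ^ 2 * k y x))
                  = ∫⁻ x in Ω, ENNReal.ofReal (u x ^ 2)
                      * ∫⁻ y, ENNReal.ofReal (k y x) := by
                apply lintegral_congr; intro x
                calc (∫⁻ y, ENNReal.ofReal (u x ^ 2 * k y x))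
                    = ∫⁻ y, ENNReal.ofReal (u x ^ 2) * ENNReal.ofReal (k y x) := by
                      apply lintegral_congr; intro y
                      rw [ENNReal.ofReal_mul (sq_nonneg _)]
                  _ = ENNReal.ofReal (u x ^ 2) * ∫⁻ y, ENNReal.ofReal (k y x) :=
                      lintegral_const_mul' _ _ ENNReal.ofReal_ne_top
              rw [heq]
              have hbd : (∫⁻ x in Ω, ENNReal.ofReal (u x ^ 2)
                    * ∫⁻ y, ENNReal.ofReal (k y x))
                  ≤ ∫⁻ x in Ω, ENNReal.ofReal (u x ^ 2) * ENNReal.ofReal M := by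
                apply lintegral_mono_ae
                filter_upwards [hM] with x hx
                exact mul_le_mul_right hx _
              refine lt_of_le_of_lt hbd ?_
              rw [lintegral_mul_const' _ _ ENNReal.ofReal_ne_top]
              exact ENNReal.mul_lt_top hL2u ENNReal.ofReal_lt_top
            exact ENNReal.add_lt_top.mpr ⟨ENNReal.add_lt_top.mpr ⟨T1, T2⟩, T3⟩
    have hprodres : (volume.restrict Ω).prod (volume.restrict (GammaHat Ω γ))
        = ((volume.restrict Ω).prod volume).restrict (Set.univ ×ˢ GammaHat Ω γ) := by
      rw [← Measure.prod_restrict, Measure.restrict_univ]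
    have hI2 : Integrable
        (fun p : Euc d × Euc d =>
          (u p.1 * γ p.1 p.2 - u p.2 * γ p.2 p.1) * (v p.1 - v p.2))
        ((volume.restrict Ω).prod (volume.restrict (GammaHat Ω γ))) := by
      rw [hprodres]
      exact hI2'.integrableOn
    have main := ibp_aux Ω (GammaHat Ω γ) hΩm hΓm hdisj
      (fun x y => u x * γ x y - u y * γ y x) (fun x y => hanti x y) v hFull hW hI1 hI2
    have e2 : (∫ y in GammaHat Ω γ, (∫ x in Ω, (u y * γ y x - u x * γ x y)) * v y)
        = ∫ y in GammaHat Ω γ, (∫ x in Ω, -(u x * γ x y - u y * γ y x)) * v y := by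
      refine integral_congr_ae (Filter.Eventually.of_forall fun y => ?_)
      exact congrArg (· * v y)
        (integral_congr_ae (Filter.Eventually.of_forall fun x => hanti x y))
    rw [e2]
    exact main
  refine ⟨key, ?_⟩
  have hone : memV Ω (fun y x => max (γ y x) ((γ x y - γ y x) ^ 2 / k y x))
      (fun _ => (1:ℝ)) := by
    refine ⟨measurable_const, ?_⟩
    unfold Vnorm energy
    simp [Measure.restrict_apply_univ]
    exact hΩb.measure_lt_top
  have h1 := key (fun _ => (1:ℝ)) hone
  simp only [mul_one, sub_self, mul_zero, integral_zero, add_zero, zero_add] at h1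
  rw [integral_neg]
  linarith [h1]
end
end

section
/- For Ω bounded open, f ∈ L²(Ω), κ : Ω → [α,β] measurable with 0 < α ≤ β < ∞ and symmetric kernel γ, the regularized Neumann problem has a unique weak solution: there exists a unique u ∈ V(Ω;γ) such that ∫_Ω f v dx = B(u,v) + ∫_Ω κ u v dx for all v ∈ V(Ω;γ). -/
open MeasureTheory ENNReal Filter

noncomputable section

namespace NeumannAux

open scoped Topology

lemma enorm_sq (a : ℝ) : (‖a‖₊ : ℝ≥0∞) ^ (2:ℝ) = ENNReal.ofReal (a ^ 2) := by
  rw [show ((‖a‖₊ : ℝ≥0∞)) = ENNReal.ofReal ‖a‖ by rw [← coe_nnnorm, ENNReal.ofReal_coe_nnreal]]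
  rw [show ((2:ℝ)) = ((2:ℕ):ℝ) by norm_num, ENNReal.rpow_natCast,
    ← ENNReal.ofReal_pow (norm_nonneg a)]
  congr 1
  rw [Real.norm_eq_abs, sq_abs]

variable {X : Type*} [MeasurableSpace X]

lemma memℒp_two_iff {f : X → ℝ} {μ : Measure X} (hm : AEStronglyMeasurable f μ) :
    MemLp f 2 μ ↔ (∫⁻ x, ENNReal.ofReal (f x ^ 2) ∂μ) < ⊤ := by
  have e : ∀ x, ‖f x‖ₑ ^ (2:ℝ≥0∞).toReal = ENNReal.ofReal (f x ^ 2) := by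
    intro x; rw [ENNReal.toReal_ofNat]; exact enorm_sq _
  constructor
  · rintro ⟨-, h⟩
    rw [eLpNorm_lt_top_iff_lintegral_rpow_enorm_lt_top (by norm_num) (by norm_num)] at h
    simpa only [e] using h
  · intro h
    refine ⟨hm, ?_⟩
    rw [eLpNorm_lt_top_iff_lintegral_rpow_enorm_lt_top (by norm_num) (by norm_num)]
    simpa only [e] using h

variable {d : ℕ} {Ω : Set (Euc d)} {γ : Euc d → Euc d → ℝ} {κ : Euc d → ℝ}

lemma measurable_gammafn (hγm : Measurable (Function.uncurry γ)) :
    Measurable (fun y => ∫⁻ x in Ω, ENNReal.ofReal (γ y x)) := by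
  have : Measurable (Function.uncurry fun y x => ENNReal.ofReal (γ y x)) :=
    ENNReal.measurable_ofReal.comp hγm
  exact Measurable.lintegral_prod_right this

lemma measurableSet_Gamma (hΩo : IsOpen Ω) (hγm : Measurable (Function.uncurry γ)) :
    MeasurableSet (Gamma Ω γ) := by
  have h1 : MeasurableSet {y | y ∉ Ω} := (hΩo.measurableSet.compl)
  have h2 : MeasurableSet {y | 0 < ∫⁻ x in Ω, ENNReal.ofReal (γ y x)} :=
    measurableSet_lt measurable_const (measurable_gammafn hγm)
  exact h1.inter h2

open scoped Classical in
/-- the weight: 1/2 on Ω, 1 on Γ, 0 elsewhere -/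
def cw (Ω : Set (Euc d)) (γ : Euc d → Euc d → ℝ) : Euc d → ℝ :=
  fun y => if y ∈ Ω then 1/2 else if y ∈ Gamma Ω γ then 1 else 0

lemma cw_nonneg (y : Euc d) : 0 ≤ cw Ω γ y := by
  unfold cw; split <;> [norm_num; skip]; split <;> norm_num

lemma cw_le_one (y : Euc d) : cw Ω γ y ≤ 1 := by
  unfold cw; split <;> [norm_num; skip]; split <;> norm_num

lemma cw_of_mem (y : Euc d) (hy : y ∈ Ω) : cw Ω γ y = 1/2 := by
  unfold cw; rw [if_pos hy]

lemma cw_of_gamma (y : Euc d) (hy : y ∈ Gamma Ω γ) : cw Ω γ y = 1 := by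
  unfold cw; rw [if_neg hy.1, if_pos hy]

lemma cw_of_out (y : Euc d) (hy : y ∉ Ω ∪ Gamma Ω γ) : cw Ω γ y = 0 := by
  rw [Set.mem_union] at hy; push_neg at hy
  unfold cw; rw [if_neg hy.1, if_neg hy.2]

lemma measurable_cw (hΩo : IsOpen Ω) (hγm : Measurable (Function.uncurry γ)) :
    Measurable (cw Ω γ) := by
  unfold cw
  exact Measurable.ite hΩo.measurableSet measurable_const
    (Measurable.ite (measurableSet_Gamma hΩo hγm) measurable_const measurable_const)

/-- first component map -/
def T1f (κ : Euc d → ℝ) (u : Euc d → ℝ) : Euc d → ℝ := fun x => Real.sqrt (κ x) * u x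

/-- second component map -/
def T2f (Ω : Set (Euc d)) (γ : Euc d → Euc d → ℝ) (u : Euc d → ℝ) : Euc d × Euc d → ℝ :=
  fun p => (u p.1 - u p.2) * Real.sqrt (cw Ω γ p.2 * γ p.2 p.1)

/-- the base measures -/
abbrev m1 (Ω : Set (Euc d)) : Measure (Euc d) := volume.restrict Ω

abbrev m2 (Ω : Set (Euc d)) : Measure (Euc d × Euc d) := (m1 Ω).prod volume

lemma measurable_T1f (hκm : Measurable κ) {u : Euc d → ℝ} (hu : Measurable u) :
    Measurable (T1f κ u) :=
  (Real.continuous_sqrt.measurable.comp hκm).mul hu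

lemma measurable_gamma_swap (hγm : Measurable (Function.uncurry γ)) :
    Measurable (fun p : Euc d × Euc d => γ p.2 p.1) :=
  hγm.comp measurable_swap

lemma measurable_T2f (hΩo : IsOpen Ω) (hγm : Measurable (Function.uncurry γ))
    {u : Euc d → ℝ} (hu : Measurable u) : Measurable (T2f Ω γ u) := by
  apply Measurable.mul
  · exact (hu.comp measurable_fst).sub (hu.comp measurable_snd)
  · exact Real.continuous_sqrt.measurable.comp
      (((measurable_cw hΩo hγm).comp measurable_snd).mul (measurable_gamma_swap hγm))

lemma sq_T2f (hγ0 : ∀ x y, 0 ≤ γ x y) (u : Euc d → ℝ) (p : Euc d × Euc d) :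
    T2f Ω γ u p ^ 2 = (u p.1 - u p.2) ^ 2 * (cw Ω γ p.2 * γ p.2 p.1) := by
  unfold T2f
  rw [mul_pow, Real.sq_sqrt (mul_nonneg (cw_nonneg _) (hγ0 _ _))]

lemma Vnorm_fst_lt_top {u : Euc d → ℝ} (hu : memV Ω γ u) :
    (∫⁻ x, ENNReal.ofReal (u x ^ 2) ∂(m1 Ω)) < ⊤ :=
  lt_of_le_of_lt le_self_add hu.2

lemma energy_lt_top {u : Euc d → ℝ} (hu : memV Ω γ u) : energy Ω γ u < ⊤ :=
  lt_of_le_of_lt le_add_self hu.2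

lemma memT1 (hΩo : IsOpen Ω) (hκm : Measurable κ) {α β : ℝ}
    (hκb : ∀ x ∈ Ω, κ x ∈ Set.Icc α β) (hα0 : 0 ≤ α) (hβ0 : 0 ≤ β) {u : Euc d → ℝ} (hu : memV Ω γ u) :
    MemLp (T1f κ u) 2 (m1 Ω) := by
  rw [memℒp_two_iff (measurable_T1f hκm hu.1).aestronglyMeasurable]
  have hb : ∫⁻ x, ENNReal.ofReal (T1f κ u x ^ 2) ∂(m1 Ω)
      ≤ ENNReal.ofReal β * ∫⁻ x, ENNReal.ofReal (u x ^ 2) ∂(m1 Ω) := by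
    rw [← lintegral_const_mul' _ _ ofReal_ne_top]
    refine lintegral_mono_ae ?_
    filter_upwards [ae_restrict_mem (μ := volume) hΩo.measurableSet] with x hx
    rw [← ENNReal.ofReal_mul hβ0]
    apply ENNReal.ofReal_le_ofReal
    have h1 := (hκb x hx).1
    have h2 := (hκb x hx).2
    unfold T1f
    rw [mul_pow, Real.sq_sqrt (hα0.trans h1)]
    exact mul_le_mul_of_nonneg_right h2 (sq_nonneg _)
  exact lt_of_le_of_lt hb (ENNReal.mul_lt_top ofReal_lt_top (Vnorm_fst_lt_top hu))

lemma memT2 (hΩo : IsOpen Ω) (hγm : Measurable (Function.uncurry γ))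
    (hγ0 : ∀ x y, 0 ≤ γ x y) {u : Euc d → ℝ} (hu : memV Ω γ u) :
    MemLp (T2f Ω γ u) 2 (m2 Ω) := by
  rw [memℒp_two_iff (measurable_T2f hΩo hγm hu.1).aestronglyMeasurable]
  have hb : ∫⁻ p, ENNReal.ofReal (T2f Ω γ u p ^ 2) ∂(m2 Ω) ≤ energy Ω γ u := by
    have heq : ∀ p : Euc d × Euc d, ENNReal.ofReal (T2f Ω γ u p ^ 2)
        ≤ ENNReal.ofReal ((u p.1 - u p.2) ^ 2 * γ p.2 p.1) := by
      intro p
      rw [sq_T2f hγ0]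
      apply ENNReal.ofReal_le_ofReal
      exact mul_le_mul_of_nonneg_left
        (mul_le_of_le_one_left (hγ0 _ _) (cw_le_one _)) (sq_nonneg _)
    calc ∫⁻ p, ENNReal.ofReal (T2f Ω γ u p ^ 2) ∂(m2 Ω)
        ≤ ∫⁻ p, ENNReal.ofReal ((u p.1 - u p.2) ^ 2 * γ p.2 p.1) ∂(m2 Ω) := lintegral_mono heq
      _ = energy Ω γ u := by
          unfold m2
          rw [lintegral_prod]
          · rfl
          · exact (ENNReal.measurable_ofReal.comp
              ((((hu.1.comp measurable_fst).sub (hu.1.comp measurable_snd)).pow_const 2).mul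
                (measurable_gamma_swap hγm))).aemeasurable
  exact lt_of_le_of_lt hb (energy_lt_top hu)

lemma measurable_pair_ofReal (hγm : Measurable (Function.uncurry γ)) {u v : Euc d → ℝ}
    (hu : Measurable u) (hv : Measurable v) :
    Measurable (fun p : Euc d × Euc d =>
      ENNReal.ofReal ((u p.1 - u p.2) * (v p.1 - v p.2) * γ p.2 p.1)) :=
  ENNReal.measurable_ofReal.comp
    ((((hu.comp measurable_fst).sub (hu.comp measurable_snd)).mul
      ((hv.comp measurable_fst).sub (hv.comp measurable_snd))).mul (measurable_gamma_swap hγm))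

lemma energy_eq_m2 (hγm : Measurable (Function.uncurry γ)) {u : Euc d → ℝ}
    (hu : Measurable u) :
    energy Ω γ u = ∫⁻ p, ENNReal.ofReal ((u p.1 - u p.2) ^ 2 * γ p.2 p.1) ∂(m2 Ω) := by
  unfold m2
  rw [lintegral_prod]
  · rfl
  · exact (ENNReal.measurable_ofReal.comp
      ((((hu.comp measurable_fst).sub (hu.comp measurable_snd)).pow_const 2).mul
        (measurable_gamma_swap hγm))).aemeasurable

/-- generic quadratic triangle-type inequality for weighted square lintegrals -/
lemma lint_sq_add_le {X : Type*} [MeasurableSpace X] {μ : Measure X} (F G W : X → ℝ)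
    (hW : ∀ x, 0 ≤ W x)
    (hF : AEMeasurable (fun x => ENNReal.ofReal (F x ^ 2 * W x)) μ) :
    ∫⁻ x, ENNReal.ofReal ((F x + G x) ^ 2 * W x) ∂μ ≤
      2 * ∫⁻ x, ENNReal.ofReal (F x ^ 2 * W x) ∂μ +
      2 * ∫⁻ x, ENNReal.ofReal (G x ^ 2 * W x) ∂μ := by
  have hpt : ∀ x, ENNReal.ofReal ((F x + G x) ^ 2 * W x) ≤
      2 * ENNReal.ofReal (F x ^ 2 * W x) + 2 * ENNReal.ofReal (G x ^ 2 * W x) := by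
    intro x
    calc ENNReal.ofReal ((F x + G x) ^ 2 * W x)
        ≤ ENNReal.ofReal (2 * (F x ^ 2 * W x) + 2 * (G x ^ 2 * W x)) := by
          apply ENNReal.ofReal_le_ofReal; nlinarith [hW x, sq_nonneg (F x - G x), sq_nonneg (F x + G x)]
      _ = ENNReal.ofReal (2 * (F x ^ 2 * W x)) + ENNReal.ofReal (2 * (G x ^ 2 * W x)) := by
          rw [ENNReal.ofReal_add (by nlinarith [hW x, sq_nonneg (F x)])
            (by nlinarith [hW x, sq_nonneg (G x)])]
      _ = 2 * ENNReal.ofReal (F x ^ 2 * W x) + 2 * ENNReal.ofReal (G x ^ 2 * W x) := by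
          rw [ENNReal.ofReal_mul (p := 2) (by norm_num),
            ENNReal.ofReal_mul (p := 2) (by norm_num), ENNReal.ofReal_ofNat]
  calc ∫⁻ x, ENNReal.ofReal ((F x + G x) ^ 2 * W x) ∂μ
      ≤ ∫⁻ x, (2 * ENNReal.ofReal (F x ^ 2 * W x) + 2 * ENNReal.ofReal (G x ^ 2 * W x)) ∂μ :=
        lintegral_mono hpt
    _ = _ := by
        rw [lintegral_add_left' (hF.const_mul 2), lintegral_const_mul' _ _ (by norm_num),
          lintegral_const_mul' _ _ (by norm_num)]

lemma memV_add (hγm : Measurable (Function.uncurry γ)) (hγ0 : ∀ x y, 0 ≤ γ x y)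
    {u v : Euc d → ℝ} (hu : memV Ω γ u) (hv : memV Ω γ v) :
    memV Ω γ (fun x => u x + v x) := by
  refine ⟨hu.1.add hv.1, ?_⟩
  have h1 : (∫⁻ x, ENNReal.ofReal ((u x + v x) ^ 2) ∂(m1 Ω)) ≤
      2 * (∫⁻ x, ENNReal.ofReal (u x ^ 2) ∂(m1 Ω)) +
      2 * (∫⁻ x, ENNReal.ofReal (v x ^ 2) ∂(m1 Ω)) := by
    have := lint_sq_add_le (μ := m1 Ω) u v (fun _ => 1) (fun _ => zero_le_one)
      ((ENNReal.measurable_ofReal.comp ((hu.1.pow_const 2).mul measurable_const)).aemeasurable)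
    simpa using this
  have h2 : energy Ω γ (fun x => u x + v x) ≤ 2 * energy Ω γ u + 2 * energy Ω γ v := by
    rw [energy_eq_m2 (u := fun x => u x + v x) hγm (hu.1.add hv.1), energy_eq_m2 hγm hu.1, energy_eq_m2 hγm hv.1]
    have := lint_sq_add_le (μ := m2 Ω) (fun p => u p.1 - u p.2) (fun p => v p.1 - v p.2)
      (fun p => γ p.2 p.1) (fun p => hγ0 _ _)
      ((ENNReal.measurable_ofReal.comp
        ((((hu.1.comp measurable_fst).sub (hu.1.comp measurable_snd)).pow_const 2).mul
          (measurable_gamma_swap hγm))).aemeasurable)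
    calc ∫⁻ p, ENNReal.ofReal (((fun x => u x + v x) p.1 - (fun x => u x + v x) p.2) ^ 2
            * γ p.2 p.1) ∂(m2 Ω)
        = ∫⁻ p, ENNReal.ofReal (((u p.1 - u p.2) + (v p.1 - v p.2)) ^ 2 * γ p.2 p.1) ∂(m2 Ω) := by
          congr 1; funext p; ring_nf
      _ ≤ _ := this
  have := hu.2
  have := hv.2
  unfold Vnorm at *
  calc (∫⁻ x, ENNReal.ofReal ((u x + v x) ^ 2) ∂(m1 Ω)) + energy Ω γ (fun x => u x + v x)
      ≤ (2 * (∫⁻ x, ENNReal.ofReal (u x ^ 2) ∂(m1 Ω)) +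
          2 * (∫⁻ x, ENNReal.ofReal (v x ^ 2) ∂(m1 Ω))) +
        (2 * energy Ω γ u + 2 * energy Ω γ v) := add_le_add h1 h2
    _ < ⊤ := by
        have hu1 := Vnorm_fst_lt_top hu
        have hv1 := Vnorm_fst_lt_top hv
        have hu2 := energy_lt_top hu
        have hv2 := energy_lt_top hv
        refine ENNReal.add_lt_top.2 ⟨ENNReal.add_lt_top.2 ⟨?_, ?_⟩, ENNReal.add_lt_top.2 ⟨?_, ?_⟩⟩ <;>
          exact ENNReal.mul_lt_top (by norm_num) (by assumption)

lemma memV_smul (hγm : Measurable (Function.uncurry γ)) {u : Euc d → ℝ} (c : ℝ)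
    (hu : memV Ω γ u) : memV Ω γ (fun x => c * u x) := by
  refine ⟨measurable_const.mul hu.1, ?_⟩
  have key : ∀ (X : Type) (_ : MeasurableSpace X) (μ : Measure X) (F W : X → ℝ),
      ∫⁻ x, ENNReal.ofReal ((c * F x) ^ 2 * W x) ∂μ
        = ENNReal.ofReal (c ^ 2) * ∫⁻ x, ENNReal.ofReal (F x ^ 2 * W x) ∂μ := by
    intro X _ μ F W
    rw [← lintegral_const_mul' _ _ ofReal_ne_top]
    congr 1; funext x
    rw [← ENNReal.ofReal_mul (by positivity)]
    congr 1; ring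
  have h1 : (∫⁻ x, ENNReal.ofReal ((c * u x) ^ 2) ∂(m1 Ω))
      = ENNReal.ofReal (c ^ 2) * ∫⁻ x, ENNReal.ofReal (u x ^ 2) ∂(m1 Ω) := by
    have := key _ _ (m1 Ω) u (fun _ => 1)
    simpa using this
  have h2 : energy Ω γ (fun x => c * u x) = ENNReal.ofReal (c ^ 2) * energy Ω γ u := by
    rw [energy_eq_m2 (u := fun x => c * u x) hγm (measurable_const.mul hu.1), energy_eq_m2 hγm hu.1]
    have := key _ _ (m2 Ω) (fun p => u p.1 - u p.2) (fun p => γ p.2 p.1)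
    rw [← this]
    congr 1; funext p; congr 2; ring
  unfold Vnorm at *
  beta_reduce
  rw [h1, h2, ← mul_add]
  exact ENNReal.mul_lt_top ofReal_lt_top hu.2

lemma memV_zero : memV Ω γ (fun _ => 0) := by
  refine ⟨measurable_const, ?_⟩
  unfold Vnorm energy
  simp

lemma memV_sub (hγm : Measurable (Function.uncurry γ)) (hγ0 : ∀ x y, 0 ≤ γ x y)
    {u v : Euc d → ℝ} (hu : memV Ω γ u) (hv : memV Ω γ v) :
    memV Ω γ (fun x => u x - v x) := by
  have := memV_add hγm hγ0 hu (memV_smul hγm (-1) hv)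
  simpa [sub_eq_add_neg] using this

/-- Bundled data for the problem. -/
structure Setup (d : ℕ) where
  Ω : Set (Euc d)
  γ : Euc d → Euc d → ℝ
  κ : Euc d → ℝ
  α : ℝ
  β : ℝ
  hΩo : IsOpen Ω
  hγm : Measurable (Function.uncurry γ)
  hγ0 : ∀ x y, 0 ≤ γ x y
  hκm : Measurable κ
  hα : 0 < α
  hαβ : α ≤ β
  hκb : ∀ x ∈ Ω, κ x ∈ Set.Icc α β

namespace Setup

variable {d : ℕ} (S : Setup d)

lemma hα0 : 0 ≤ S.α := S.hα.le

lemma hβ0 : 0 ≤ S.β := S.hα0.trans S.hαβ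

lemma κ_pos {x : Euc d} (hx : x ∈ S.Ω) : 0 < S.κ x := S.hα.trans_le (S.hκb x hx).1

abbrev H1 := Lp ℝ 2 (m1 S.Ω)

abbrev H2 := Lp ℝ 2 (m2 S.Ω)

abbrev E := WithLp 2 (S.H1 × S.H2)

def T1L (u : Euc d → ℝ) (hu : memV S.Ω S.γ u) : S.H1 :=
  (memT1 S.hΩo S.hκm S.hκb S.hα0 S.hβ0 hu).toLp _

def T2L (u : Euc d → ℝ) (hu : memV S.Ω S.γ u) : S.H2 :=
  (memT2 S.hΩo S.hγm S.hγ0 hu).toLp _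

def Tp (u : Euc d → ℝ) (hu : memV S.Ω S.γ u) : S.E :=
  (WithLp.equiv 2 _).symm (S.T1L u hu, S.T2L u hu)

lemma coe_T1L (u : Euc d → ℝ) (hu : memV S.Ω S.γ u) :
    (S.T1L u hu : Euc d → ℝ) =ᵐ[m1 S.Ω] T1f S.κ u := MemLp.coeFn_toLp _

lemma coe_T2L (u : Euc d → ℝ) (hu : memV S.Ω S.γ u) :
    (S.T2L u hu : Euc d × Euc d → ℝ) =ᵐ[m2 S.Ω] T2f S.Ω S.γ u := MemLp.coeFn_toLp _

lemma inner_T1L (u v : Euc d → ℝ) (hu : memV S.Ω S.γ u) (hv : memV S.Ω S.γ v) :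
    (inner ℝ (S.T1L u hu) (S.T1L v hv) : ℝ) = ∫ x in S.Ω, S.κ x * u x * v x := by
  rw [MeasureTheory.L2.inner_def]
  apply integral_congr_ae
  filter_upwards [S.coe_T1L u hu, S.coe_T1L v hv,
    ae_restrict_mem (μ := volume) S.hΩo.measurableSet] with x h1 h2 hx
  rw [RCLike.inner_apply, conj_trivial, h1, h2]
  unfold T1f
  rw [show Real.sqrt (S.κ x) * v x * (Real.sqrt (S.κ x) * u x)
      = (Real.sqrt (S.κ x) * Real.sqrt (S.κ x)) * u x * v x by ring,
    Real.mul_self_sqrt (S.κ_pos hx).le]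

lemma inner_T2L (u v : Euc d → ℝ) (hu : memV S.Ω S.γ u) (hv : memV S.Ω S.γ v) :
    (inner ℝ (S.T2L u hu) (S.T2L v hv) : ℝ) = Bform S.Ω S.γ u v := by
  classical
  set Ω := S.Ω
  set γ := S.γ
  set g : Euc d × Euc d → ℝ := fun p =>
    (u p.1 - u p.2) * (v p.1 - v p.2) * (cw Ω γ p.2 * γ p.2 p.1) with hg
  have hae : (fun p => (inner ℝ ((S.T2L u hu : Euc d × Euc d → ℝ) p)
      ((S.T2L v hv : Euc d × Euc d → ℝ) p) : ℝ)) =ᵐ[m2 Ω] g := by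
    filter_upwards [S.coe_T2L u hu, S.coe_T2L v hv] with p h1 h2
    rw [RCLike.inner_apply, conj_trivial, h1, h2]
    unfold T2f
    rw [show (v p.1 - v p.2) * Real.sqrt (cw S.Ω S.γ p.2 * S.γ p.2 p.1) *
        ((u p.1 - u p.2) * Real.sqrt (cw S.Ω S.γ p.2 * S.γ p.2 p.1))
        = (u p.1 - u p.2) * (v p.1 - v p.2) *
          (Real.sqrt (cw S.Ω S.γ p.2 * S.γ p.2 p.1) * Real.sqrt (cw S.Ω S.γ p.2 * S.γ p.2 p.1)) by ring,
      Real.mul_self_sqrt (mul_nonneg (cw_nonneg _) (S.hγ0 _ _))]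
  have hInt : Integrable g (m2 Ω) :=
    (MeasureTheory.L2.integrable_inner (𝕜 := ℝ) (S.T2L u hu) (S.T2L v hv)).congr hae
  have step2 : (inner ℝ (S.T2L u hu) (S.T2L v hv) : ℝ) = ∫ p, g p ∂(m2 Ω) := by
    rw [MeasureTheory.L2.inner_def]
    exact integral_congr_ae hae
  -- integrability of partial integrals
  have restr : ∀ t : Set (Euc d), Integrable g ((m1 Ω).prod (volume.restrict t)) := by
    intro t
    have h0 := hInt.restrict (s := Set.univ ×ˢ t)
    rwa [← Measure.prod_restrict, Measure.restrict_univ] at h0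
  have hIA : Integrable (fun x => ∫ y in Ω, g (x, y)) (m1 Ω) := (restr Ω).integral_prod_left
  have hIB : Integrable (fun x => ∫ y in Gamma Ω γ, g (x, y)) (m1 Ω) :=
    (restr (Gamma Ω γ)).integral_prod_left
  have hdisj : Disjoint Ω (Gamma Ω γ) := by
    rw [Set.disjoint_left]; intro a ha ha'; exact ha'.1 ha
  have step5 : ∀ᵐ x ∂(m1 Ω), (∫ y, g (x, y)) =
      (∫ y in Ω, g (x, y)) + ∫ y in Gamma Ω γ, g (x, y) := by
    filter_upwards [hInt.prod_right_ae] with x hx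
    rw [← setIntegral_eq_integral_of_forall_compl_eq_zero (s := Ω ∪ Gamma Ω γ)
      (fun y hy => by simp [hg, cw_of_out _ hy]),
      setIntegral_union hdisj (measurableSet_Gamma S.hΩo S.hγm)
        hx.integrableOn hx.integrableOn]
  have step7 : ∀ x : Euc d, (∫ y in Ω, g (x, y)) =
      (1/2) * ∫ y in Ω, (u x - u y) * (v x - v y) * γ y x := by
    intro x
    rw [← integral_const_mul]
    apply setIntegral_congr_fun S.hΩo.measurableSet
    intro y hy
    simp only [hg, cw_of_mem (Ω := Ω) (γ := γ) _ hy]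
    ring
  have step8 : ∀ x : Euc d, (∫ y in Gamma Ω γ, g (x, y)) =
      ∫ y in Gamma Ω γ, (u x - u y) * (v x - v y) * γ y x := by
    intro x
    apply setIntegral_congr_fun (measurableSet_Gamma S.hΩo S.hγm)
    intro y hy
    simp only [hg, cw_of_gamma (Ω := Ω) (γ := γ) _ hy]
    ring
  rw [step2]
  unfold m2 at *
  rw [integral_prod _ hInt, integral_congr_ae step5, integral_add hIA hIB]
  unfold Bform
  simp only [step7, step8]
  rw [integral_const_mul]

lemma inner_Tp (u v : Euc d → ℝ) (hu : memV S.Ω S.γ u) (hv : memV S.Ω S.γ v) :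
    (inner ℝ (S.Tp u hu) (S.Tp v hv) : ℝ)
      = Bform S.Ω S.γ u v + ∫ x in S.Ω, S.κ x * u x * v x := by
  rw [show (inner ℝ (S.Tp u hu) (S.Tp v hv) : ℝ)
      = inner ℝ (S.T1L u hu) (S.T1L v hv) + inner ℝ (S.T2L u hu) (S.T2L v hv) from rfl,
    inner_T1L, inner_T2L]
  ring

lemma Tp_add (u v : Euc d → ℝ) (hu : memV S.Ω S.γ u) (hv : memV S.Ω S.γ v) :
    S.Tp (fun x => u x + v x) (memV_add S.hγm S.hγ0 hu hv) = S.Tp u hu + S.Tp v hv := by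
  have h1 : S.T1L (fun x => u x + v x) (memV_add S.hγm S.hγ0 hu hv)
      = S.T1L u hu + S.T1L v hv := by
    apply MeasureTheory.Lp.ext
    filter_upwards [S.coe_T1L u hu, S.coe_T1L v hv, Lp.coeFn_add (S.T1L u hu) (S.T1L v hv),
      S.coe_T1L _ (memV_add S.hγm S.hγ0 hu hv)] with x e1 e2 e3 e4
    rw [e4, e3, Pi.add_apply, e1, e2]
    unfold T1f; ring
  have h2 : S.T2L (fun x => u x + v x) (memV_add S.hγm S.hγ0 hu hv)
      = S.T2L u hu + S.T2L v hv := by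
    apply MeasureTheory.Lp.ext
    filter_upwards [S.coe_T2L u hu, S.coe_T2L v hv, Lp.coeFn_add (S.T2L u hu) (S.T2L v hv),
      S.coe_T2L _ (memV_add S.hγm S.hγ0 hu hv)] with p e1 e2 e3 e4
    rw [e4, e3, Pi.add_apply, e1, e2]
    unfold T2f; ring
  unfold Tp
  rw [h1, h2]
  rfl

lemma Tp_smul (c : ℝ) (u : Euc d → ℝ) (hu : memV S.Ω S.γ u) :
    S.Tp (fun x => c * u x) (memV_smul S.hγm c hu) = c • S.Tp u hu := by
  have h1 : S.T1L (fun x => c * u x) (memV_smul S.hγm c hu) = c • S.T1L u hu := by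
    apply MeasureTheory.Lp.ext
    filter_upwards [S.coe_T1L u hu, Lp.coeFn_smul c (S.T1L u hu),
      S.coe_T1L _ (memV_smul S.hγm c hu)] with x e1 e3 e4
    rw [e4, e3, Pi.smul_apply, e1, smul_eq_mul]
    unfold T1f; ring
  have h2 : S.T2L (fun x => c * u x) (memV_smul S.hγm c hu) = c • S.T2L u hu := by
    apply MeasureTheory.Lp.ext
    filter_upwards [S.coe_T2L u hu, Lp.coeFn_smul c (S.T2L u hu),
      S.coe_T2L _ (memV_smul S.hγm c hu)] with p e1 e3 e4
    rw [e4, e3, Pi.smul_apply, e1, smul_eq_mul]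
    unfold T2f; ring
  unfold Tp
  rw [h1, h2]
  rfl

lemma Tp_zero : S.Tp (fun _ => 0) memV_zero = 0 := by
  have h1 : S.T1L (fun _ => 0) memV_zero = 0 := by
    apply MeasureTheory.Lp.ext
    filter_upwards [S.coe_T1L _ memV_zero, Lp.coeFn_zero ℝ 2 (m1 S.Ω)] with x e1 e2
    rw [e1, e2]
    unfold T1f; simp
  have h2 : S.T2L (fun _ => 0) memV_zero = 0 := by
    apply MeasureTheory.Lp.ext
    filter_upwards [S.coe_T2L _ memV_zero, Lp.coeFn_zero ℝ 2 (m2 S.Ω)] with p e1 e2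
    rw [e1, e2]
    unfold T2f; simp
  unfold Tp
  rw [h1, h2]
  rfl

/-- the range of Tp, as a submodule -/
def ranT : Submodule ℝ S.E where
  carrier := {p | ∃ u : Euc d → ℝ, ∃ hu : memV S.Ω S.γ u, p = S.Tp u hu}
  add_mem' := by
    rintro p q ⟨u, hu, rfl⟩ ⟨v, hv, rfl⟩
    exact ⟨fun x => u x + v x, memV_add S.hγm S.hγ0 hu hv, (S.Tp_add u v hu hv).symm⟩
  smul_mem' := by
    rintro c p ⟨u, hu, rfl⟩
    exact ⟨fun x => c * u x, memV_smul S.hγm c hu, (S.Tp_smul c u hu).symm⟩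
  zero_mem' := ⟨fun _ => 0, memV_zero, S.Tp_zero.symm⟩

section Functional

variable (f : Euc d → ℝ)

/-- f divided by sqrt κ -/
def fdiv : Euc d → ℝ := fun x => f x / Real.sqrt (S.κ x)

lemma memℒp_fdiv (hf : MemLp f 2 (m1 S.Ω)) : MemLp (S.fdiv f) 2 (m1 S.Ω) := by
  refine MemLp.of_le (hf.const_mul ((Real.sqrt S.α)⁻¹)) ?_ ?_
  · exact (hf.aestronglyMeasurable.mul
      (((Real.continuous_sqrt.measurable.comp S.hκm).inv).aestronglyMeasurable)).congr
      (by filter_upwards with x; unfold fdiv; simp [div_eq_mul_inv])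
  · filter_upwards [ae_restrict_mem (μ := volume) S.hΩo.measurableSet] with x hx
    unfold fdiv
    rw [Real.norm_eq_abs, Real.norm_eq_abs, abs_mul, abs_div]
    have hsα : 0 < Real.sqrt S.α := Real.sqrt_pos.2 S.hα
    have hsκ : Real.sqrt S.α ≤ Real.sqrt (S.κ x) := Real.sqrt_le_sqrt (S.hκb x hx).1
    rw [abs_of_pos (Real.sqrt_pos.2 (S.κ_pos hx)), abs_of_pos (inv_pos.2 hsα), mul_comm,
      div_eq_mul_inv]
    have : (Real.sqrt (S.κ x))⁻¹ ≤ (Real.sqrt S.α)⁻¹ := inv_anti₀ hsα hsκ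
    exact mul_le_mul_of_nonneg_left this (abs_nonneg _)

/-- the continuous linear functional on E -/
def ℓfun (hf : MemLp f 2 (m1 S.Ω)) : S.E →L[ℝ] ℝ :=
  (innerSL ℝ ((S.memℒp_fdiv f hf).toLp _)).comp
    ((ContinuousLinearMap.fst ℝ S.H1 S.H2).comp
      (WithLp.prodContinuousLinearEquiv 2 ℝ S.H1 S.H2).toContinuousLinearMap)

lemma ℓfun_Tp (hf : MemLp f 2 (m1 S.Ω)) (v : Euc d → ℝ) (hv : memV S.Ω S.γ v) :
    S.ℓfun f hf (S.Tp v hv) = ∫ x in S.Ω, f x * v x := by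
  have h0 : S.ℓfun f hf (S.Tp v hv)
      = (inner ℝ ((S.memℒp_fdiv f hf).toLp _) (S.T1L v hv) : ℝ) := rfl
  rw [h0, MeasureTheory.L2.inner_def]
  apply integral_congr_ae
  filter_upwards [MemLp.coeFn_toLp (S.memℒp_fdiv f hf), S.coe_T1L v hv,
    ae_restrict_mem (μ := volume) S.hΩo.measurableSet] with x e1 e2 hx
  rw [RCLike.inner_apply, conj_trivial, e1, e2]
  unfold fdiv T1f
  have hne : Real.sqrt (S.κ x) ≠ 0 := (Real.sqrt_pos.2 (S.κ_pos hx)).ne'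
  field_simp

end Functional

section Limit

/-- Realizing a limit point of the range of `Tp` as an element of the range. -/
lemma limit_realize (w : S.E) (us : ℕ → Euc d → ℝ) (hus : ∀ n, memV S.Ω S.γ (us n))
    (hten : Tendsto (fun n => S.Tp (us n) (hus n)) atTop (𝓝 w)) :
    ∃ u : Euc d → ℝ, ∃ hu : memV S.Ω S.γ u, S.Tp u hu = w := by
  classical
  have hΩm : MeasurableSet S.Ω := S.hΩo.measurableSet
  have hΓm : MeasurableSet (Gamma S.Ω S.γ) := measurableSet_Gamma S.hΩo S.hγm
  set g : S.H1 := w.fst with hgdef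
  set h : S.H2 := w.snd with hhdef
  -- component convergence in Lp
  have hcle := (WithLp.prodContinuousLinearEquiv 2 ℝ S.H1 S.H2).continuous
  have hten1 : Tendsto (fun n => S.T1L (us n) (hus n)) atTop (𝓝 g) :=
    ((continuous_fst.comp hcle).tendsto w).comp hten
  have hten2' : Tendsto (fun n => S.T2L (us n) (hus n)) atTop (𝓝 h) :=
    ((continuous_snd.comp hcle).tendsto w).comp hten
  -- convergence in measure and a.e. subsequences
  have him1 : TendstoInMeasure (m1 S.Ω)
      (fun n => ((S.T1L (us n) (hus n) : S.H1) : Euc d → ℝ)) atTop (g : Euc d → ℝ) := by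
    refine tendstoInMeasure_of_tendsto_eLpNorm (p := 2) (by norm_num)
      (fun n => Lp.aestronglyMeasurable _) (Lp.aestronglyMeasurable _) ?_
    exact (Lp.tendsto_Lp_iff_tendsto_eLpNorm' _ _).1 hten1
  obtain ⟨ns, hns_mono, hns_ae⟩ := him1.exists_seq_tendsto_ae
  have hten2 : Tendsto (fun k => S.T2L (us (ns k)) (hus (ns k))) atTop (𝓝 h) :=
    hten2'.comp hns_mono.tendsto_atTop
  have him2 : TendstoInMeasure (m2 S.Ω)
      (fun k => ((S.T2L (us (ns k)) (hus (ns k)) : S.H2) : Euc d × Euc d → ℝ)) atTop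
      (h : Euc d × Euc d → ℝ) := by
    refine tendstoInMeasure_of_tendsto_eLpNorm (p := 2) (by norm_num)
      (fun n => Lp.aestronglyMeasurable _) (Lp.aestronglyMeasurable _) ?_
    exact (Lp.tendsto_Lp_iff_tendsto_eLpNorm' _ _).1 hten2
  obtain ⟨ms, hms_mono, hms_ae⟩ := him2.exists_seq_tendsto_ae
  set φ : ℕ → ℕ := fun k => ns (ms k) with hφ
  set v : ℕ → Euc d → ℝ := fun k => us (φ k) with hv
  have hvm : ∀ k, Measurable (v k) := fun k => (hus _).1
  set G : Euc d → ℝ := (g : Euc d → ℝ) with hG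
  have hGm : Measurable G := (Lp.stronglyMeasurable g).measurable
  set H : Euc d × Euc d → ℝ := (h : Euc d × Euc d → ℝ) with hH
  have hHm : Measurable H := (Lp.stronglyMeasurable h).measurable
  -- a.e. convergence with concrete representatives
  have aeT1 : ∀ᵐ x ∂(m1 S.Ω), Tendsto (fun k => T1f S.κ (v k) x) atTop (𝓝 (G x)) := by
    have hall : ∀ᵐ x ∂(m1 S.Ω), ∀ k : ℕ,
        ((S.T1L (us (φ k)) (hus (φ k)) : S.H1) : Euc d → ℝ) x = T1f S.κ (us (φ k)) x :=
      ae_all_iff.2 fun k => S.coe_T1L _ _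
    filter_upwards [hns_ae, hall] with x hx hx2
    have hsub : Tendsto (fun k => ((S.T1L (us (ns (ms k))) (hus (ns (ms k))) : S.H1) :
        Euc d → ℝ) x) atTop (𝓝 (G x)) := hx.comp hms_mono.tendsto_atTop
    exact hsub.congr fun k => hx2 k
  have aeT2 : ∀ᵐ p ∂(m2 S.Ω), Tendsto (fun k => T2f S.Ω S.γ (v k) p) atTop (𝓝 (H p)) := by
    have hall : ∀ᵐ p ∂(m2 S.Ω), ∀ k : ℕ,
        ((S.T2L (us (φ k)) (hus (φ k)) : S.H2) : Euc d × Euc d → ℝ) p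
          = T2f S.Ω S.γ (us (φ k)) p :=
      ae_all_iff.2 fun k => S.coe_T2L _ _
    filter_upwards [hms_ae, hall] with p hp hp2
    exact hp.congr fun k => hp2 k
  -- the candidate limit on Ω
  set u₀ : Euc d → ℝ := fun x => G x / Real.sqrt (S.κ x) with hu₀
  have hu₀m : Measurable u₀ := hGm.div (Real.continuous_sqrt.measurable.comp S.hκm)
  have aeConv1 : ∀ᵐ x ∂(m1 S.Ω), Tendsto (fun k => v k x) atTop (𝓝 (u₀ x)) := by
    filter_upwards [aeT1, ae_restrict_mem hΩm] with x hx hxΩ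
    have hpos : (0:ℝ) < Real.sqrt (S.κ x) := Real.sqrt_pos.2 (S.κ_pos hxΩ)
    have h2 := hx.div_const (Real.sqrt (S.κ x))
    refine Tendsto.congr (fun k => ?_) h2
    unfold T1f
    rw [mul_div_cancel_left₀ _ hpos.ne']
  -- measurable null supersets of the bad sets
  obtain ⟨B1, hB1sub, hB1m, hB1null⟩ :=
    exists_measurable_superset_of_null (ae_iff.1 aeConv1)
  obtain ⟨N, hNsub, hNm, hNnull⟩ := exists_measurable_superset_of_null (ae_iff.1 aeT2)
  -- slices of N are null for a.e. y
  have hswap : ∀ᵐ y ∂(volume : Measure (Euc d)), (m1 S.Ω) {x | (x, y) ∈ N} = 0 := by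
    have hNswap : MeasurableSet (Prod.swap ⁻¹' N : Set (Euc d × Euc d)) :=
      hNm.preimage measurable_swap
    have h1 : ((volume : Measure (Euc d)).prod (m1 S.Ω)) (Prod.swap ⁻¹' N) = 0 := by
      have e : (m2 S.Ω) N = ((volume : Measure (Euc d)).prod (m1 S.Ω)) (Prod.swap ⁻¹' N) := by
        conv_lhs => rw [show (m2 S.Ω) =
          Measure.map Prod.swap ((volume : Measure (Euc d)).prod (m1 S.Ω)) from
            (Measure.prod_swap).symm]
        rw [Measure.map_apply measurable_swap hNm]
      rw [← e]; exact hNnull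
    have h2 := (Measure.measure_prod_null hNswap).1 h1
    filter_upwards [h2] with y hy
    exact hy
  -- limits exist a.e. on Γ
  have hΓlim : ∀ᵐ y ∂(volume.restrict (Gamma S.Ω S.γ)),
      ∃ L, Tendsto (fun k => v k y) atTop (𝓝 L) := by
    filter_upwards [ae_restrict_of_ae hswap, ae_restrict_mem hΓm] with y hy0 hyΓ
    have hγym : Measurable fun x => S.γ y x := S.hγm.comp measurable_prodMk_left
    have hpos : (m1 S.Ω) {x | 0 < S.γ y x} ≠ 0 := by
      intro h0
      have hae0 : ∀ᵐ x ∂(m1 S.Ω), ENNReal.ofReal (S.γ y x) = 0 := by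
        rw [ae_iff]
        refine measure_mono_null (fun x hx => ?_) h0
        simp only [Set.mem_setOf_eq] at hx ⊢
        rcases lt_or_eq_of_le (S.hγ0 y x) with hlt | heq
        · exact hlt
        · exact absurd (by rw [← heq]; simp) hx
      have hz : (∫⁻ x in S.Ω, ENNReal.ofReal (S.γ y x)) = 0 := by
        rw [show (∫⁻ x in S.Ω, ENNReal.ofReal (S.γ y x))
            = ∫⁻ x, ENNReal.ofReal (S.γ y x) ∂(m1 S.Ω) from rfl,
          lintegral_congr_ae hae0, lintegral_zero]
      have hcontra := hyΓ.2
      rw [hz] at hcontra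
      exact lt_irrefl 0 hcontra
    have hnull : (m1 S.Ω) (B1 ∪ {x | (x, y) ∈ N}) = 0 := measure_union_null hB1null hy0
    have hne : (m1 S.Ω) ({x | 0 < S.γ y x} \ (B1 ∪ {x | (x, y) ∈ N})) ≠ 0 := by
      intro h0
      refine hpos (measure_mono_null (fun x hx => ?_) (measure_union_null h0 hnull))
      by_cases hxb : x ∈ B1 ∪ {x | (x, y) ∈ N}
      · exact Or.inr hxb
      · exact Or.inl ⟨hx, hxb⟩
    obtain ⟨x, hxpos, hxgood⟩ := nonempty_of_measure_ne_zero hne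
    simp only [Set.mem_union, Set.mem_setOf_eq, not_or] at hxgood
    obtain ⟨hx1, hx2⟩ := hxgood
    have hconvx : Tendsto (fun k => v k x) atTop (𝓝 (u₀ x)) := by
      by_contra hc
      exact hx1 (hB1sub hc)
    have hP : Tendsto (fun k => T2f S.Ω S.γ (v k) (x, y)) atTop (𝓝 (H (x, y))) := by
      by_contra hc
      exact hx2 (hNsub hc)
    have hcw : cw S.Ω S.γ y = 1 := cw_of_gamma _ hyΓ
    have hsq : (0:ℝ) < Real.sqrt (cw S.Ω S.γ y * S.γ y x) := by
      rw [hcw, one_mul]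
      exact Real.sqrt_pos.2 hxpos
    have h3 : Tendsto (fun k => v k x - v k y) atTop
        (𝓝 (H (x, y) / Real.sqrt (cw S.Ω S.γ y * S.γ y x))) := by
      have h4 := hP.div_const (Real.sqrt (cw S.Ω S.γ y * S.γ y x))
      refine Tendsto.congr (fun k => ?_) h4
      unfold T2f
      exact mul_div_cancel_right₀ _ hsq.ne'
    refine ⟨u₀ x - H (x, y) / Real.sqrt (cw S.Ω S.γ y * S.γ y x), ?_⟩
    have h5 := hconvx.sub h3
    refine Tendsto.congr (fun k => ?_) h5
    ring
  obtain ⟨flim, hflimm, hflim_ae⟩ := measurable_limit_of_tendsto_metrizable_ae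
    (fun k => (hvm k).aemeasurable) hΓlim
  set u : Euc d → ℝ := fun z =>
    if z ∈ S.Ω then u₀ z else if z ∈ Gamma S.Ω S.γ then flim z else 0 with hudef
  have hum : Measurable u :=
    Measurable.ite hΩm hu₀m (Measurable.ite hΓm hflimm measurable_const)
  -- a.e. convergence towards u
  have aeU1 : ∀ᵐ x ∂(m1 S.Ω), Tendsto (fun k => v k x) atTop (𝓝 (u x)) := by
    filter_upwards [aeConv1, ae_restrict_mem hΩm] with x hx hxΩ
    have : u x = u₀ x := by simp only [hudef]; rw [if_pos hxΩ]
    rw [this]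
    exact hx
  have aeU2 : ∀ᵐ y ∂(volume : Measure (Euc d)),
      y ∈ S.Ω ∪ Gamma S.Ω S.γ → Tendsto (fun k => v k y) atTop (𝓝 (u y)) := by
    have h1 : ∀ᵐ y ∂(volume : Measure (Euc d)),
        y ∈ S.Ω → Tendsto (fun k => v k y) atTop (𝓝 (u y)) :=
      (ae_restrict_iff' hΩm).1 aeU1
    have h2 : ∀ᵐ y ∂(volume : Measure (Euc d)),
        y ∈ Gamma S.Ω S.γ → Tendsto (fun k => v k y) atTop (𝓝 (u y)) := by
      rw [← ae_restrict_iff' hΓm]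
      filter_upwards [hflim_ae, ae_restrict_mem hΓm] with y hy hyΓ
      have : u y = flim y := by simp only [hudef]; rw [if_neg hyΓ.1, if_pos hyΓ]
      rw [this]
      exact hy
    filter_upwards [h1, h2] with y hy1 hy2 hmem
    rcases hmem with hmem | hmem
    exacts [hy1 hmem, hy2 hmem]
  -- a.e. identities
  have keyT1 : T1f S.κ u =ᵐ[m1 S.Ω] G := by
    filter_upwards [ae_restrict_mem hΩm] with x hxΩ
    have hpos : (0:ℝ) < Real.sqrt (S.κ x) := Real.sqrt_pos.2 (S.κ_pos hxΩ)
    have hux : u x = G x / Real.sqrt (S.κ x) := by simp only [hudef]; rw [if_pos hxΩ]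
    unfold T1f
    rw [hux, mul_div_cancel₀ _ hpos.ne']
  have keyT2 : T2f S.Ω S.γ u =ᵐ[m2 S.Ω] H := by
    obtain ⟨C1, hC1sub, hC1m, hC1null⟩ := exists_measurable_superset_of_null (ae_iff.1 aeU1)
    obtain ⟨C2, hC2sub, hC2m, hC2null⟩ := exists_measurable_superset_of_null (ae_iff.1 aeU2)
    have l1 : ∀ᵐ p ∂(m2 S.Ω), Tendsto (fun k => v k p.1) atTop (𝓝 (u p.1)) := by
      rw [ae_iff]
      refine measure_mono_null (t := C1 ×ˢ Set.univ) (fun p hp => ?_) ?_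
      · exact (Set.mk_mem_prod (hC1sub hp) (Set.mem_univ p.2) : p ∈ C1 ×ˢ Set.univ)
      · rw [Measure.prod_prod, hC1null, zero_mul]
    have l2 : ∀ᵐ p ∂(m2 S.Ω), p.2 ∈ S.Ω ∪ Gamma S.Ω S.γ →
        Tendsto (fun k => v k p.2) atTop (𝓝 (u p.2)) := by
      rw [ae_iff]
      refine measure_mono_null (t := Set.univ ×ˢ C2) (fun p hp => ?_) ?_
      · exact (Set.mk_mem_prod (Set.mem_univ p.1) (hC2sub hp) : p ∈ Set.univ ×ˢ C2)
      · rw [Measure.prod_prod, hC2null, mul_zero]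
    filter_upwards [aeT2, l1, l2] with p hp h1 h2
    by_cases hmem : p.2 ∈ S.Ω ∪ Gamma S.Ω S.γ
    · have h4 := (h1.sub (h2 hmem)).mul_const (Real.sqrt (cw S.Ω S.γ p.2 * S.γ p.2 p.1))
      exact tendsto_nhds_unique h4 hp
    · have hc0 : cw S.Ω S.γ p.2 = 0 := cw_of_out _ hmem
      have hz : ∀ k, T2f S.Ω S.γ (v k) p = 0 := by
        intro k; unfold T2f; rw [hc0, zero_mul, Real.sqrt_zero, mul_zero]
      have hH0 : H p = 0 := tendsto_nhds_unique ((hp.congr hz) :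
        Tendsto (fun _ : ℕ => (0:ℝ)) atTop (𝓝 (H p))) tendsto_const_nhds
      rw [hH0]
      unfold T2f; rw [hc0, zero_mul, Real.sqrt_zero, mul_zero]
  -- membership in V
  have humem : memV S.Ω S.γ u := by
    refine ⟨hum, ?_⟩
    have hfst : (∫⁻ x, ENNReal.ofReal (u x ^ 2) ∂(m1 S.Ω)) < ⊤ := by
      have hbound : ∀ᵐ x ∂(m1 S.Ω), ENNReal.ofReal (u x ^ 2)
          ≤ ENNReal.ofReal S.α⁻¹ * ENNReal.ofReal (G x ^ 2) := by
        filter_upwards [ae_restrict_mem hΩm] with x hxΩ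
        rw [← ENNReal.ofReal_mul (inv_nonneg.2 S.hα0)]
        apply ENNReal.ofReal_le_ofReal
        have hκx := S.κ_pos hxΩ
        have hux : u x = G x / Real.sqrt (S.κ x) := by simp only [hudef]; rw [if_pos hxΩ]
        rw [hux, div_pow, Real.sq_sqrt hκx.le]
        calc G x ^ 2 / S.κ x ≤ G x ^ 2 / S.α :=
              div_le_div_of_nonneg_left (sq_nonneg _) S.hα (S.hκb x hxΩ).1 |>.trans_eq rfl
          _ = S.α⁻¹ * G x ^ 2 := by rw [div_eq_inv_mul]
      calc (∫⁻ x, ENNReal.ofReal (u x ^ 2) ∂(m1 S.Ω))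
          ≤ ∫⁻ x, ENNReal.ofReal S.α⁻¹ * ENNReal.ofReal (G x ^ 2) ∂(m1 S.Ω) :=
            lintegral_mono_ae hbound
        _ = ENNReal.ofReal S.α⁻¹ * ∫⁻ x, ENNReal.ofReal (G x ^ 2) ∂(m1 S.Ω) :=
            lintegral_const_mul' _ _ ofReal_ne_top
        _ < ⊤ := ENNReal.mul_lt_top ofReal_lt_top
            ((memℒp_two_iff (Lp.aestronglyMeasurable g)).1 (Lp.memLp g))
    have hHsq : (∫⁻ p, ENNReal.ofReal (H p ^ 2) ∂(m2 S.Ω)) < ⊤ :=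
      (memℒp_two_iff (Lp.aestronglyMeasurable h)).1 (Lp.memLp h)
    have hen : energy S.Ω S.γ u < ⊤ := by
      rw [energy_eq_m2 S.hγm hum]
      set St := S.Ω ∪ Gamma S.Ω S.γ with hStdef
      have hStm : MeasurableSet St := hΩm.union hΓm
      have hmf : Measurable (fun p : Euc d × Euc d =>
          ENNReal.ofReal ((u p.1 - u p.2) ^ 2 * S.γ p.2 p.1)) :=
        ENNReal.measurable_ofReal.comp
          ((((hum.comp measurable_fst).sub (hum.comp measurable_snd)).pow_const 2).mul
            (measurable_gamma_swap S.hγm))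
      have hsplit : (m2 S.Ω) = (m1 S.Ω).prod (volume.restrict St)
          + (m1 S.Ω).prod (volume.restrict Stᶜ) := by
        rw [← Measure.prod_add, Measure.restrict_add_restrict_compl hStm]
      rw [hsplit, lintegral_add_measure]
      have hpart2 : (∫⁻ p, ENNReal.ofReal ((u p.1 - u p.2) ^ 2 * S.γ p.2 p.1)
          ∂((m1 S.Ω).prod (volume.restrict Stᶜ))) = 0 := by
        rw [lintegral_prod_symm' _ hmf]
        have hz : ∀ᵐ y ∂(volume.restrict Stᶜ),
            (∫⁻ x, ENNReal.ofReal ((u x - u y) ^ 2 * S.γ y x) ∂(m1 S.Ω)) = 0 := by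
          filter_upwards [ae_restrict_mem hStm.compl] with y hy
          have hyO : y ∉ S.Ω := fun hc => hy (Or.inl hc)
          have hyΓ : y ∉ Gamma S.Ω S.γ := fun hc => hy (Or.inr hc)
          have hzero : (∫⁻ x, ENNReal.ofReal (S.γ y x) ∂(m1 S.Ω)) = 0 := by
            by_contra hnz
            exact hyΓ ⟨hyO, pos_iff_ne_zero.2 hnz⟩
          have h5 : ∀ᵐ x ∂(m1 S.Ω), ENNReal.ofReal (S.γ y x) = 0 :=
            (lintegral_eq_zero_iff
              (ENNReal.measurable_ofReal.comp (S.hγm.comp measurable_prodMk_left))).1 hzero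
          have h6 : ∀ᵐ x ∂(m1 S.Ω), ENNReal.ofReal ((u x - u y) ^ 2 * S.γ y x) = 0 := by
            filter_upwards [h5] with x hx
            have : S.γ y x = 0 := le_antisymm (by simpa using hx) (S.hγ0 y x)
            rw [this, mul_zero, ENNReal.ofReal_zero]
          rw [lintegral_congr_ae h6, lintegral_zero]
        rw [lintegral_congr_ae hz, lintegral_zero]
      have hle : (m1 S.Ω).prod (volume.restrict St) ≤ (m2 S.Ω) := by
        have hpr := Measure.prod_restrict (μ := m1 S.Ω) (ν := (volume : Measure (Euc d)))
          Set.univ St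
        rw [Measure.restrict_univ] at hpr
        rw [hpr]
        exact Measure.restrict_le_self
      have hpart1 : (∫⁻ p, ENNReal.ofReal ((u p.1 - u p.2) ^ 2 * S.γ p.2 p.1)
          ∂((m1 S.Ω).prod (volume.restrict St)))
          ≤ 2 * ∫⁻ p, ENNReal.ofReal (H p ^ 2) ∂(m2 S.Ω) := by
        have hkey' : ∀ᵐ p ∂((m1 S.Ω).prod (volume.restrict St)), T2f S.Ω S.γ u p = H p :=
          Eventually.filter_mono (ae_mono hle) keyT2
        have hmemSt : ∀ᵐ p ∂((m1 S.Ω).prod (volume.restrict St)), p.2 ∈ St := by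
          rw [ae_iff]
          refine measure_mono_null (t := Set.univ ×ˢ Stᶜ) (fun p hp => ?_) ?_
          · exact (Set.mk_mem_prod (Set.mem_univ p.1) (hp : p.2 ∈ Stᶜ) :
              p ∈ Set.univ ×ˢ Stᶜ)
          · rw [Measure.prod_prod, Measure.restrict_apply hStm.compl]
            simp
        have hptle : ∀ᵐ p ∂((m1 S.Ω).prod (volume.restrict St)),
            ENNReal.ofReal ((u p.1 - u p.2) ^ 2 * S.γ p.2 p.1)
              ≤ 2 * ENNReal.ofReal (H p ^ 2) := by
          filter_upwards [hkey', hmemSt] with p hpeq hpSt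
          rw [← hpeq, sq_T2f S.hγ0]
          have hcw : (1:ℝ)/2 ≤ cw S.Ω S.γ p.2 := by
            rcases hpSt with h' | h'
            · rw [cw_of_mem _ h']
            · rw [cw_of_gamma _ h']; norm_num
          calc ENNReal.ofReal ((u p.1 - u p.2) ^ 2 * S.γ p.2 p.1)
              ≤ ENNReal.ofReal (2 * ((u p.1 - u p.2) ^ 2 * (cw S.Ω S.γ p.2 * S.γ p.2 p.1))) := by
                apply ENNReal.ofReal_le_ofReal
                nlinarith [sq_nonneg (u p.1 - u p.2), S.hγ0 p.2 p.1,
                  mul_nonneg (sq_nonneg (u p.1 - u p.2)) (S.hγ0 p.2 p.1)]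
            _ = 2 * ENNReal.ofReal ((u p.1 - u p.2) ^ 2 * (cw S.Ω S.γ p.2 * S.γ p.2 p.1)) := by
                rw [ENNReal.ofReal_mul (by norm_num), ENNReal.ofReal_ofNat]
        calc (∫⁻ p, ENNReal.ofReal ((u p.1 - u p.2) ^ 2 * S.γ p.2 p.1)
            ∂((m1 S.Ω).prod (volume.restrict St)))
            ≤ ∫⁻ p, 2 * ENNReal.ofReal (H p ^ 2) ∂((m1 S.Ω).prod (volume.restrict St)) :=
              lintegral_mono_ae hptle
          _ = 2 * ∫⁻ p, ENNReal.ofReal (H p ^ 2) ∂((m1 S.Ω).prod (volume.restrict St)) :=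
              lintegral_const_mul' _ _ (by norm_num)
          _ ≤ 2 * ∫⁻ p, ENNReal.ofReal (H p ^ 2) ∂(m2 S.Ω) := by
              gcongr
      calc (∫⁻ p, ENNReal.ofReal ((u p.1 - u p.2) ^ 2 * S.γ p.2 p.1)
            ∂((m1 S.Ω).prod (volume.restrict St)))
          + (∫⁻ p, ENNReal.ofReal ((u p.1 - u p.2) ^ 2 * S.γ p.2 p.1)
            ∂((m1 S.Ω).prod (volume.restrict Stᶜ)))
          ≤ 2 * (∫⁻ p, ENNReal.ofReal (H p ^ 2) ∂(m2 S.Ω)) + 0 := by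
            exact add_le_add hpart1 (le_of_eq hpart2)
        _ < ⊤ := by
            rw [add_zero]
            exact ENNReal.mul_lt_top (by norm_num) hHsq
    exact ENNReal.add_lt_top.2 ⟨hfst, hen⟩
  -- conclusion
  refine ⟨u, humem, ?_⟩
  have e1 : S.T1L u humem = g := Lp.ext ((S.coe_T1L u humem).trans keyT1)
  have e2 : S.T2L u humem = h := Lp.ext ((S.coe_T2L u humem).trans keyT2)
  have : (WithLp.equiv 2 (S.H1 × S.H2)) (S.Tp u humem) = (WithLp.equiv 2 _) w := by
    apply Prod.ext
    · exact e1
    · exact e2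
  exact (WithLp.equiv 2 (S.H1 × S.H2)).injective this

end Limit

lemma Tp_congr {a b : Euc d → ℝ} (hab : a = b) (ha : memV S.Ω S.γ a) :
    S.Tp a ha = S.Tp b (hab ▸ ha) := by subst hab; rfl

lemma Tp_sub (a b : Euc d → ℝ) (ha : memV S.Ω S.γ a) (hb : memV S.Ω S.γ b) :
    S.Tp (fun x => a x - b x) (memV_sub S.hγm S.hγ0 ha hb)
      = S.Tp a ha - S.Tp b hb := by
  have hab : (fun x => a x - b x) = (fun x => a x + (-1) * b x) := funext fun x => by ring
  rw [S.Tp_congr hab (memV_sub S.hγm S.hγ0 ha hb)]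
  have h1 : S.Tp (fun x => a x + (-1) * b x)
      (memV_add S.hγm S.hγ0 ha (memV_smul S.hγm (-1) hb))
      = S.Tp a ha + S.Tp (fun x => (-1) * b x) (memV_smul S.hγm (-1) hb) :=
    S.Tp_add a _ ha (memV_smul S.hγm (-1) hb)
  have h2 : S.Tp (fun x => (-1) * b x) (memV_smul S.hγm (-1) hb) = -(S.Tp b hb) := by
    rw [S.Tp_smul (-1) b hb, neg_one_smul]
  calc S.Tp (fun x => a x + (-1) * b x) _ = S.Tp a ha + S.Tp (fun x => (-1) * b x)
        (memV_smul S.hγm (-1) hb) := h1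
    _ = S.Tp a ha - S.Tp b hb := by rw [h2, sub_eq_add_neg]

set_option maxHeartbeats 1000000 in
set_option synthInstance.maxHeartbeats 400000 in
/-- Existence of the weak solution, abstract form. -/
lemma exists_weak_solution (f : Euc d → ℝ) (hf : MemLp f 2 (m1 S.Ω)) :
    ∃ u : Euc d → ℝ, ∃ hu : memV S.Ω S.γ u, ∀ v : Euc d → ℝ, ∀ hv : memV S.Ω S.γ v,
      (∫ x in S.Ω, f x * v x) = (inner ℝ (S.Tp u hu) (S.Tp v hv) : ℝ) := by
  classical
  set K := S.ranT.topologicalClosure with hK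
  haveI : CompleteSpace K := (Submodule.isClosed_topologicalClosure S.ranT).completeSpace_coe
  set ℓ := S.ℓfun f hf with hℓ
  set ℓK : K →L[ℝ] ℝ := ℓ.comp (Submodule.subtypeL K) with hℓK
  set w' : K := (InnerProductSpace.toDual ℝ K).symm ℓK with hw'def
  have hw' : ∀ p : K, (inner ℝ w' p : ℝ) = ℓK p := fun p =>
    InnerProductSpace.toDual_symm_apply
  have hwcl : (w' : S.E) ∈ closure (S.ranT : Set S.E) := by
    rw [← Submodule.topologicalClosure_coe]
    exact w'.2
  obtain ⟨seq, hseqmem, hseqten⟩ := mem_closure_iff_seq_limit.1 hwcl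
  choose us hus hseq_eq using hseqmem
  have hten : Tendsto (fun n => S.Tp (us n) (hus n)) atTop (𝓝 (w' : S.E)) := by
    have : (fun n => S.Tp (us n) (hus n)) = seq := funext fun n => (hseq_eq n).symm
    rw [this]
    exact hseqten
  obtain ⟨u, hu, hTu⟩ := S.limit_realize (w' : S.E) us hus hten
  refine ⟨u, hu, fun v hv => ?_⟩
  have hvK : S.Tp v hv ∈ K := Submodule.le_topologicalClosure _ ⟨v, hv, rfl⟩
  have h1 : ℓ (S.Tp v hv) = (inner ℝ w' (⟨S.Tp v hv, hvK⟩ : K) : ℝ) := by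
    have h1' := (hw' ⟨S.Tp v hv, hvK⟩).symm
    exact h1'
  have h2 : (inner ℝ w' (⟨S.Tp v hv, hvK⟩ : K) : ℝ)
      = (inner ℝ (w' : S.E) (S.Tp v hv) : ℝ) := rfl
  have h3 : ℓ (S.Tp v hv) = ∫ x in S.Ω, f x * v x := S.ℓfun_Tp f hf v hv
  rw [← h3, h1, h2, ← hTu]

/-- Uniqueness of the weak solution. -/
lemma unique_sol (u u' : Euc d → ℝ) (hu : memV S.Ω S.γ u) (hu' : memV S.Ω S.γ u')
    (he : ∀ v : Euc d → ℝ, ∀ hv : memV S.Ω S.γ v,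
      (inner ℝ (S.Tp u' hu') (S.Tp v hv) : ℝ) = (inner ℝ (S.Tp u hu) (S.Tp v hv) : ℝ)) :
    u' =ᵐ[volume.restrict (S.Ω ∪ Gamma S.Ω S.γ)] u := by
  classical
  have hΩm : MeasurableSet S.Ω := S.hΩo.measurableSet
  set D : Euc d → ℝ := fun x => u' x - u x with hD
  have hDmem : memV S.Ω S.γ D := memV_sub S.hγm S.hγ0 hu' hu
  have hDT : S.Tp D hDmem = S.Tp u' hu' - S.Tp u hu := S.Tp_sub u' u hu' hu
  have hz : (inner ℝ (S.Tp D hDmem) (S.Tp D hDmem) : ℝ) = 0 := by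
    nth_rewrite 1 [hDT]
    rw [inner_sub_left, he D hDmem, sub_self]
  have hT0 : S.Tp D hDmem = 0 := inner_self_eq_zero.1 hz
  have hT10 : S.T1L D hDmem = 0 := congrArg Prod.fst
    (congrArg (WithLp.equiv 2 (S.H1 × S.H2)) hT0)
  have hT20 : S.T2L D hDmem = 0 := congrArg Prod.snd
    (congrArg (WithLp.equiv 2 (S.H1 × S.H2)) hT0)
  -- D = 0 a.e. on Ω
  have hDΩ : ∀ᵐ x ∂(volume.restrict S.Ω), D x = 0 := by
    have h1 : T1f S.κ D =ᵐ[m1 S.Ω] 0 :=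
      (S.coe_T1L D hDmem).symm.trans (hT10 ▸ Lp.coeFn_zero ℝ 2 (m1 S.Ω))
    filter_upwards [h1, ae_restrict_mem hΩm] with x hx hxΩ
    have hpos : (0:ℝ) < Real.sqrt (S.κ x) := Real.sqrt_pos.2 (S.κ_pos hxΩ)
    have : Real.sqrt (S.κ x) * D x = 0 := hx
    exact (mul_eq_zero.1 this).resolve_left hpos.ne'
  -- D = 0 a.e. on Γ
  have hT2ae : T2f S.Ω S.γ D =ᵐ[m2 S.Ω] 0 :=
    (S.coe_T2L D hDmem).symm.trans (hT20 ▸ Lp.coeFn_zero ℝ 2 (m2 S.Ω))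
  have hDΓ : ∀ᵐ y ∂(volume.restrict (Gamma S.Ω S.γ)), D y = 0 := by
    obtain ⟨CD, hCDsub, hCDm, hCDnull⟩ :=
      exists_measurable_superset_of_null (ae_iff.1 hDΩ)
    have l1 : ∀ᵐ p ∂(m2 S.Ω), D p.1 = 0 := by
      rw [ae_iff]
      refine measure_mono_null (t := CD ×ˢ Set.univ) (fun p hp => ?_) ?_
      · exact Set.mk_mem_prod (hCDsub hp) (Set.mem_univ p.2)
      · rw [Measure.prod_prod, hCDnull, zero_mul]
    have hsq0 : ∀ᵐ p ∂(m2 S.Ω),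
        ENNReal.ofReal (D p.2 ^ 2 * (cw S.Ω S.γ p.2 * S.γ p.2 p.1)) = 0 := by
      filter_upwards [hT2ae, l1] with p hp h1
      have h2 : (D p.1 - D p.2) * Real.sqrt (cw S.Ω S.γ p.2 * S.γ p.2 p.1) = 0 := hp
      rw [h1, zero_sub] at h2
      have h3 : D p.2 ^ 2 * (cw S.Ω S.γ p.2 * S.γ p.2 p.1) = 0 := by
        rcases mul_eq_zero.1 h2 with h4 | h4
        · have h5 : D p.2 = 0 := neg_eq_zero.1 h4
          rw [h5]; ring
        · rw [(Real.sqrt_eq_zero (mul_nonneg (cw_nonneg _) (S.hγ0 _ _))).1 h4, mul_zero]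
      rw [h3, ENNReal.ofReal_zero]
    have hDm : Measurable D := hu'.1.sub hu.1
    have hmeas2 : Measurable (fun p : Euc d × Euc d =>
        ENNReal.ofReal (D p.2 ^ 2 * (cw S.Ω S.γ p.2 * S.γ p.2 p.1))) :=
      ENNReal.measurable_ofReal.comp
        ((((hDm.comp measurable_snd).pow_const 2)).mul
          (((measurable_cw S.hΩo S.hγm).comp measurable_snd).mul
            (measurable_gamma_swap S.hγm)))
    have hint0 : (∫⁻ p, ENNReal.ofReal (D p.2 ^ 2 * (cw S.Ω S.γ p.2 * S.γ p.2 p.1))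
        ∂(m2 S.Ω)) = 0 := by
      rw [lintegral_congr_ae hsq0, lintegral_zero]
    rw [lintegral_prod_symm' _ hmeas2] at hint0
    have hinner_meas : Measurable (fun y =>
        ∫⁻ x, ENNReal.ofReal (D y ^ 2 * (cw S.Ω S.γ y * S.γ y x)) ∂(m1 S.Ω)) := by
      apply Measurable.lintegral_prod_right
      exact ENNReal.measurable_ofReal.comp
        ((((hDm.comp measurable_fst).pow_const 2)).mul
          (((measurable_cw S.hΩo S.hγm).comp measurable_fst).mul S.hγm))
    have hae_inner : ∀ᵐ y ∂(volume : Measure (Euc d)),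
        (∫⁻ x, ENNReal.ofReal (D y ^ 2 * (cw S.Ω S.γ y * S.γ y x)) ∂(m1 S.Ω)) = 0 :=
      (lintegral_eq_zero_iff hinner_meas).1 hint0
    filter_upwards [ae_restrict_of_ae hae_inner,
      ae_restrict_mem (measurableSet_Gamma S.hΩo S.hγm)] with y hy hyΓ
    by_contra hDy
    have hcw : cw S.Ω S.γ y = 1 := cw_of_gamma _ hyΓ
    have hpos : (0:ℝ) < D y ^ 2 := by positivity
    have h5 : (∫⁻ x, ENNReal.ofReal (D y ^ 2) * ENNReal.ofReal (S.γ y x) ∂(m1 S.Ω)) = 0 := by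
      rw [← hy]
      apply lintegral_congr
      intro x
      rw [hcw, one_mul, ENNReal.ofReal_mul (sq_nonneg _)]
    rw [lintegral_const_mul' _ _ ofReal_ne_top] at h5
    rcases mul_eq_zero.1 h5 with h6 | h6
    · exact absurd h6 (by simp [ENNReal.ofReal_eq_zero, not_le, hpos, hDy])
    · have := hyΓ.2
      rw [show (∫⁻ x in S.Ω, ENNReal.ofReal (S.γ y x))
          = ∫⁻ x, ENNReal.ofReal (S.γ y x) ∂(m1 S.Ω) from rfl, h6] at this
      exact lt_irrefl 0 this
  -- combine
  have hN1 : (volume.restrict S.Ω) {z | ¬ u' z = u z} = 0 := by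
    refine measure_mono_null (fun z hz => ?_) (ae_iff.1 hDΩ)
    simp only [Set.mem_setOf_eq] at hz ⊢
    intro hc
    exact hz (sub_eq_zero.1 hc)
  have hN2 : (volume.restrict (Gamma S.Ω S.γ)) {z | ¬ u' z = u z} = 0 := by
    refine measure_mono_null (fun z hz => ?_) (ae_iff.1 hDΓ)
    simp only [Set.mem_setOf_eq] at hz ⊢
    intro hc
    exact hz (sub_eq_zero.1 hc)
  have hfin : (volume.restrict (S.Ω ∪ Gamma S.Ω S.γ)) {z | ¬ u' z = u z} = 0 := by
    have hle := Measure.restrict_union_le (μ := (volume : Measure (Euc d)))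
      (s := S.Ω) (s' := Gamma S.Ω S.γ)
    have h6 := Measure.le_iff'.1 hle {z | ¬ u' z = u z}
    rw [Measure.add_apply, hN1, hN2, add_zero] at h6
    exact le_antisymm h6 zero_le
  exact ae_iff.2 hfin

end Setup

end NeumannAux

/-- the regularized Neumann problem Lu + κu = f, Nu = 0 has a weak solution,
unique modulo a.e. equality on Ω ∪ Γ. -/


theorem statement5 {d : ℕ} (Ω : Set (Euc d)) (hΩo : IsOpen Ω) (hΩne : Ω.Nonempty)
    (hΩb : Bornology.IsBounded Ω)
    (γ : Euc d → Euc d → ℝ) (hγm : Measurable (Function.uncurry γ)) (hγ0 : ∀ x y, 0 ≤ γ x y)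
    (hγsym : ∀ x y, γ x y = γ y x)
    (f : Euc d → ℝ) (hf : MemLp f 2 (volume.restrict Ω))
    (κ : Euc d → ℝ) (hκm : Measurable κ)
    (α β : ℝ) (hα : 0 < α) (hαβ : α ≤ β)
    (hκ : ∀ x ∈ Ω, κ x ∈ Set.Icc α β) :
    ∃ u : Euc d → ℝ, memV Ω γ u ∧
      (∀ v : Euc d → ℝ, memV Ω γ v →
        (∫ x in Ω, f x * v x) = Bform Ω γ u v + ∫ x in Ω, κ x * u x * v x) ∧
      (∀ u' : Euc d → ℝ, memV Ω γ u' →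
        (∀ v : Euc d → ℝ, memV Ω γ v →
          (∫ x in Ω, f x * v x) = Bform Ω γ u' v + ∫ x in Ω, κ x * u' x * v x) →
        u' =ᵐ[volume.restrict (Ω ∪ Gamma Ω γ)] u) := by
  classical
  let S : NeumannAux.Setup d := ⟨Ω, γ, κ, α, β, hΩo, hγm, hγ0, hκm, hα, hαβ, hκ⟩
  obtain ⟨u, hu, hsol⟩ := S.exists_weak_solution f hf
  refine ⟨u, hu, ?_, ?_⟩
  · intro v hv
    exact (hsol v hv).trans (S.inner_Tp u v hu hv)
  · intro u' hu' hvar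
    apply S.unique_sol u u' hu hu'
    intro v hv
    have h1 : (∫ x in Ω, f x * v x) = (inner ℝ (S.Tp u' hu') (S.Tp v hv) : ℝ) := by
      rw [hvar v hv, ← S.inner_Tp u' v hu' hv]
    rw [← h1]
    exact hsol v hv
end
end

section
/- If ∫_{ℝᵈ} ess inf_{x∈Ω} γ(y,x) dy > 0, then the nonlocal Poincaré inequality holds: there exists C > 0 such that for all u ∈ V(Ω;γ), ∫_Ω∫_Ω (u(x)−u(y))² dy dx ≤ C ∫_Ω∫_{ℝᵈ}(u(x)−u(y))²γ(y,x) dy dx. -/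
open MeasureTheory ENNReal Filter

noncomputable section

/-- if ∫_{ℝᵈ} ess inf_{x∈Ω} γ(y,x) dy > 0, the nonlocal Poincaré inequality holds. -/
theorem statement9 {d : ℕ} (Ω : Set (Euc d)) (hΩo : IsOpen Ω) (hΩne : Ω.Nonempty)
    (hΩb : Bornology.IsBounded Ω)
    (γ : Euc d → Euc d → ℝ) (hγm : Measurable (Function.uncurry γ)) (hγ0 : ∀ x y, 0 ≤ γ x y)
    (hinf : 0 < ∫⁻ y, essInf (fun x => ENNReal.ofReal (γ y x)) (volume.restrict Ω)) :
    PoincareHolds Ω γ := by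
  classical
  set g : Euc d → ℝ≥0∞ :=
    fun y => essInf (fun x => ENNReal.ofReal (γ y x)) (volume.restrict Ω) with hg
  -- the "bad set" measure function, measurable in y
  set φ : ℕ → Euc d → ℝ≥0∞ := fun n y =>
    (volume.restrict Ω) {x | ENNReal.ofReal (γ y x) < ((n : ℝ≥0∞) + 1)⁻¹} with hφ
  have hφm : ∀ n, Measurable (φ n) := by
    intro n
    have hs : MeasurableSet {p : Euc d × Euc d |
        ENNReal.ofReal (γ p.1 p.2) < ((n : ℝ≥0∞) + 1)⁻¹} :=
      measurableSet_lt hγm.ennreal_ofReal measurable_const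
    exact measurable_measure_prodMk_left hs
  -- the candidate sets
  set A : ℕ → ℕ → Set (Euc d) := fun n m =>
    {y | φ n y = 0} ∩ Metric.ball (0 : Euc d) (m + 1) with hA
  have hAmeas : ∀ n m, MeasurableSet (A n m) := fun n m =>
    ((hφm n) (measurableSet_singleton 0)).inter measurableSet_ball
  -- find a set of positive measure
  obtain ⟨n, m, hApos⟩ : ∃ n m : ℕ, 0 < volume (A n m) := by
    by_contra h
    push_neg at h
    have hnull : volume {y | g y ≠ 0} = 0 := by
      have hsub : {y | g y ≠ 0} ⊆ ⋃ n : ℕ, ⋃ m : ℕ, A n m := by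
        intro y hy
        have hy0 : g y ≠ 0 := hy
        obtain ⟨n, hn⟩ := ENNReal.exists_inv_nat_lt hy0
        have hεg : ((n : ℝ≥0∞) + 1)⁻¹ ≤ g y := by
          refine le_trans (ENNReal.inv_le_inv.mpr ?_) hn.le
          exact le_add_right le_rfl
        have hφ0 : φ n y = 0 := by
          have hae : ∀ᵐ x ∂(volume.restrict Ω), g y ≤ ENNReal.ofReal (γ y x) :=
            ae_essInf_le
          have : (volume.restrict Ω) {x | ENNReal.ofReal (γ y x) < g y} = 0 := by
            simpa [ae_iff, not_le] using hae
          refine measure_mono_null (fun x hx => ?_) this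
          exact lt_of_lt_of_le hx hεg
        obtain ⟨m, hm⟩ := exists_nat_gt ‖y‖
        refine Set.mem_iUnion.mpr ⟨n, Set.mem_iUnion.mpr ⟨m, ⟨hφ0, ?_⟩⟩⟩
        simp only [Metric.mem_ball, dist_zero_right]
        linarith
      refine measure_mono_null hsub ?_
      refine measure_iUnion_null fun n => measure_iUnion_null fun m => ?_
      exact le_antisymm (h n m) (by positivity)
    have hzero : ∫⁻ y, g y = 0 := by
      have hg0 : g =ᵐ[volume] 0 := by
        rw [Filter.EventuallyEq, ae_iff]
        simpa using hnull
      rw [lintegral_congr_ae hg0]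
      simp
    rw [hg] at hzero
    exact absurd hzero (ne_of_gt hinf)
  set ε : ℝ≥0∞ := ((n : ℝ≥0∞) + 1)⁻¹ with hε
  set S : Set (Euc d) := A n m with hS
  have hSmeas : MeasurableSet S := hAmeas n m
  have hS0 : volume S ≠ 0 := ne_of_gt hApos
  have hStop : volume S ≠ ⊤ := by
    have hb : volume (Metric.ball (0 : Euc d) (m + 1)) < ⊤ :=
      Metric.isBounded_ball.measure_lt_top
    exact ne_of_lt (lt_of_le_of_lt (measure_mono Set.inter_subset_right) hb)
  have hε0 : ε ≠ 0 := by
    simp [hε]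
  have hεtop : ε ≠ ⊤ := by
    simp [hε, ENNReal.inv_ne_top]
  have hΩ0 : volume Ω ≠ 0 := ne_of_gt (hΩo.measure_pos volume hΩne)
  have hΩtop : volume Ω ≠ ⊤ := ne_of_lt hΩb.measure_lt_top
  -- key property of points of S
  have hSprop : ∀ t ∈ S, ∀ᵐ x ∂(volume.restrict Ω), ε ≤ ENNReal.ofReal (γ t x) := by
    intro t ht
    have h0 : φ n t = 0 := ht.1
    rw [ae_iff]
    simpa [hφ, not_le] using h0
  -- the constant
  set C' : ℝ≥0∞ := (volume S)⁻¹ * (4 * volume Ω * ε⁻¹) with hC'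
  have hC'top : C' ≠ ⊤ := by
    refine ENNReal.mul_ne_top (ENNReal.inv_ne_top.mpr hS0) ?_
    exact ENNReal.mul_ne_top (ENNReal.mul_ne_top (by simp) hΩtop) (ENNReal.inv_ne_top.mpr hε0)
  have hC'0 : C' ≠ 0 := by
    simp only [hC', mul_ne_zero_iff]
    refine ⟨ENNReal.inv_ne_zero.mpr hStop, ⟨⟨by simp, hΩ0⟩, ENNReal.inv_ne_zero.mpr hεtop⟩⟩
  refine ⟨C'.toReal, ENNReal.toReal_pos hC'0 hC'top, ?_⟩
  intro v hv
  obtain ⟨hvm, -⟩ := hv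
  rw [ENNReal.ofReal_toReal hC'top]
  -- notation
  set E : ℝ≥0∞ := ∫⁻ x in Ω, ∫⁻ y, ENNReal.ofReal ((v x - v y) ^ 2 * γ y x) with hE
  set F : Euc d → ℝ≥0∞ := fun x => ∫⁻ t in S, ENNReal.ofReal ((v x - v t) ^ 2) with hF
  set I : ℝ≥0∞ := ∫⁻ x in Ω, F x with hI
  -- measurability of the basic integrand
  have hmeas1 : Measurable (fun p : Euc d × Euc d => ENNReal.ofReal ((v p.1 - v p.2) ^ 2)) :=
    (((hvm.comp measurable_fst).sub (hvm.comp measurable_snd)).pow_const 2).ennreal_ofReal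
  have hmeas2 : Measurable (fun p : Euc d × Euc d =>
      ENNReal.ofReal ((v p.1 - v p.2) ^ 2 * γ p.2 p.1)) := by
    refine Measurable.ennreal_ofReal ?_
    exact (((hvm.comp measurable_fst).sub (hvm.comp measurable_snd)).pow_const 2).mul
      (hγm.comp measurable_swap)
  -- Step 1: I ≤ ε⁻¹ * E
  have step1 : I ≤ ε⁻¹ * E := by
    have hswap1 : I = ∫⁻ t in S, ∫⁻ x in Ω, ENNReal.ofReal ((v x - v t) ^ 2) := by
      rw [hI, hF]
      exact lintegral_lintegral_swap hmeas1.aemeasurable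
    have hptwise : ∀ t ∈ S,
        (∫⁻ x in Ω, ENNReal.ofReal ((v x - v t) ^ 2)) ≤
          ε⁻¹ * ∫⁻ x in Ω, ENNReal.ofReal ((v x - v t) ^ 2 * γ t x) := by
      intro t ht
      have hb : ∀ᵐ x ∂(volume.restrict Ω),
          ENNReal.ofReal ((v x - v t) ^ 2) ≤
            ε⁻¹ * ENNReal.ofReal ((v x - v t) ^ 2 * γ t x) := by
        filter_upwards [hSprop t ht] with x hx
        rw [ENNReal.ofReal_mul (sq_nonneg _)]
        calc ENNReal.ofReal ((v x - v t) ^ 2)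
            = ε⁻¹ * (ε * ENNReal.ofReal ((v x - v t) ^ 2)) := by
              rw [← mul_assoc, ENNReal.inv_mul_cancel hε0 hεtop, one_mul]
          _ ≤ ε⁻¹ * (ENNReal.ofReal ((v x - v t) ^ 2) * ENNReal.ofReal (γ t x)) := by
              rw [mul_comm ε]
              gcongr
      calc (∫⁻ x in Ω, ENNReal.ofReal ((v x - v t) ^ 2))
          ≤ ∫⁻ x in Ω, ε⁻¹ * ENNReal.ofReal ((v x - v t) ^ 2 * γ t x) := lintegral_mono_ae hb
        _ = ε⁻¹ * ∫⁻ x in Ω, ENNReal.ofReal ((v x - v t) ^ 2 * γ t x) :=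
          lintegral_const_mul' _ _ (ENNReal.inv_ne_top.mpr hε0)
    calc I = ∫⁻ t in S, ∫⁻ x in Ω, ENNReal.ofReal ((v x - v t) ^ 2) := hswap1
      _ ≤ ∫⁻ t in S, ε⁻¹ * ∫⁻ x in Ω, ENNReal.ofReal ((v x - v t) ^ 2 * γ t x) := by
          refine lintegral_mono_ae ?_
          filter_upwards [ae_restrict_mem hSmeas] with t ht using hptwise t ht
      _ = ε⁻¹ * ∫⁻ t in S, ∫⁻ x in Ω, ENNReal.ofReal ((v x - v t) ^ 2 * γ t x) :=
          lintegral_const_mul' _ _ (ENNReal.inv_ne_top.mpr hε0)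
      _ ≤ ε⁻¹ * ∫⁻ t, ∫⁻ x in Ω, ENNReal.ofReal ((v x - v t) ^ 2 * γ t x) := by
          gcongr
          exact Measure.restrict_le_self
      _ = ε⁻¹ * E := by
          rw [hE]
          congr 1
          exact (lintegral_lintegral_swap hmeas2.aemeasurable).symm
  -- Step 2: volume S * LHS ≤ 4 * volume Ω * I
  have step2 : volume S * (∫⁻ x in Ω, ∫⁻ y in Ω, ENNReal.ofReal ((v x - v y) ^ 2)) ≤
      4 * volume Ω * I := by
    have key0 : ∀ x y : Euc d, volume S * ENNReal.ofReal ((v x - v y) ^ 2) ≤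
        2 * F x + 2 * F y := by
      intro x y
      have h1 : volume S * ENNReal.ofReal ((v x - v y) ^ 2) =
          ∫⁻ _ in S, ENNReal.ofReal ((v x - v y) ^ 2) := by
        rw [setLIntegral_const, mul_comm]
      rw [h1]
      have h2 : (∫⁻ t in S, ENNReal.ofReal ((v x - v y) ^ 2)) ≤
          ∫⁻ t in S, (2 * ENNReal.ofReal ((v x - v t) ^ 2) +
            2 * ENNReal.ofReal ((v y - v t) ^ 2)) := by
        refine lintegral_mono fun t => ?_
        have hr : (v x - v y) ^ 2 ≤ 2 * (v x - v t) ^ 2 + 2 * (v y - v t) ^ 2 := by nlinarith [sq_nonneg ((v x - v t) + (v y - v t))]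
        calc ENNReal.ofReal ((v x - v y) ^ 2)
            ≤ ENNReal.ofReal (2 * (v x - v t) ^ 2 + 2 * (v y - v t) ^ 2) :=
              ENNReal.ofReal_le_ofReal hr
          _ = 2 * ENNReal.ofReal ((v x - v t) ^ 2) + 2 * ENNReal.ofReal ((v y - v t) ^ 2) := by
              rw [ENNReal.ofReal_add (by positivity) (by positivity),
                ENNReal.ofReal_mul (by norm_num), ENNReal.ofReal_mul (by norm_num)]
              norm_num
      refine h2.trans (le_of_eq ?_)
      have hm1 : Measurable fun t => 2 * ENNReal.ofReal ((v x - v t) ^ 2) :=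
        ((((measurable_const.sub hvm)).pow_const 2).ennreal_ofReal).const_mul 2
      rw [lintegral_add_left hm1, lintegral_const_mul' 2 _ (by simp),
        lintegral_const_mul' 2 _ (by simp)]
    calc volume S * (∫⁻ x in Ω, ∫⁻ y in Ω, ENNReal.ofReal ((v x - v y) ^ 2))
        = ∫⁻ x in Ω, volume S * ∫⁻ y in Ω, ENNReal.ofReal ((v x - v y) ^ 2) :=
          (lintegral_const_mul' _ _ hStop).symm
      _ = ∫⁻ x in Ω, ∫⁻ y in Ω, volume S * ENNReal.ofReal ((v x - v y) ^ 2) :=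
          lintegral_congr fun x => (lintegral_const_mul' _ _ hStop).symm
      _ ≤ ∫⁻ x in Ω, ∫⁻ y in Ω, (2 * F x + 2 * F y) := by
          refine lintegral_mono fun x => lintegral_mono fun y => key0 x y
      _ = ∫⁻ x in Ω, (2 * F x * volume Ω + 2 * ∫⁻ y in Ω, F y) := by
          refine lintegral_congr fun x => ?_
          rw [lintegral_add_left measurable_const, setLIntegral_const]
          congr 1
          refine lintegral_const_mul' 2 _ (by simp)
      _ = (∫⁻ x in Ω, 2 * F x * volume Ω) + ∫⁻ _ in Ω, (2 * ∫⁻ y in Ω, F y) :=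
          lintegral_add_right _ measurable_const
      _ = 2 * volume Ω * I + (2 * ∫⁻ y in Ω, F y) * volume Ω := by
          rw [setLIntegral_const]
          congr 1
          calc (∫⁻ x in Ω, 2 * F x * volume Ω)
              = ∫⁻ x in Ω, (2 * volume Ω) * F x :=
                lintegral_congr fun x => by ring
            _ = 2 * volume Ω * I := lintegral_const_mul' _ _
                (ENNReal.mul_ne_top (by simp) hΩtop)
      _ = 4 * volume Ω * I := by
          rw [show (∫⁻ y in Ω, F y) = I from rfl]; ring
  -- combine
  have hLHS : volume S * (∫⁻ x in Ω, ∫⁻ y in Ω, ENNReal.ofReal ((v x - v y) ^ 2)) ≤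
      4 * volume Ω * (ε⁻¹ * E) := by
    refine step2.trans ?_
    gcongr
  calc (∫⁻ x in Ω, ∫⁻ y in Ω, ENNReal.ofReal ((v x - v y) ^ 2))
      = (volume S)⁻¹ * (volume S *
          ∫⁻ x in Ω, ∫⁻ y in Ω, ENNReal.ofReal ((v x - v y) ^ 2)) := by
        rw [← mul_assoc, ENNReal.inv_mul_cancel hS0 hStop, one_mul]
    _ ≤ (volume S)⁻¹ * (4 * volume Ω * (ε⁻¹ * E)) := by gcongr
    _ = C' * E := by rw [hC']; ring
end
end

section
/- Let Ω ⊂ ℝᵈ be a bounded domain and ε > 0. Then there exists C > 0 such that for all u ∈ L²(Ω): ∫_Ω∫_Ω (u(x)−u(y))² dy dx ≤ C ∫_Ω∫_Ω (u(x)−u(y))² 1_{‖x−y‖<ε} dy dx. -/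
open MeasureTheory ENNReal Filter

noncomputable section

namespace Statement10Aux

open Metric Set

variable {d : ℕ}

/-- Double integral of squared difference. -/
def II (A B : Set (Euc d)) (v : Euc d → ℝ) : ℝ≥0∞ :=
  ∫⁻ x in A, ∫⁻ y in B, ENNReal.ofReal ((v x - v y) ^ 2)

lemma sq_ineq (a b c : ℝ) :
    ENNReal.ofReal ((a - c) ^ 2) ≤
      2 * ENNReal.ofReal ((a - b) ^ 2) + 2 * ENNReal.ofReal ((b - c) ^ 2) := by
  have h : (a - c) ^ 2 ≤ 2 * (a - b) ^ 2 + 2 * (b - c) ^ 2 := by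
    nlinarith [sq_nonneg (a - 2 * b + c)]
  calc ENNReal.ofReal ((a - c) ^ 2)
      ≤ ENNReal.ofReal (2 * (a - b) ^ 2 + 2 * (b - c) ^ 2) := ENNReal.ofReal_le_ofReal h
    _ = ENNReal.ofReal (2 * (a - b) ^ 2) + ENNReal.ofReal (2 * (b - c) ^ 2) :=
        ENNReal.ofReal_add (by positivity) (by positivity)
    _ = 2 * ENNReal.ofReal ((a - b) ^ 2) + 2 * ENNReal.ofReal ((b - c) ^ 2) := by
        rw [ENNReal.ofReal_mul (by norm_num), ENNReal.ofReal_mul (by norm_num)]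
        norm_num

lemma meas_inner (v : Euc d → ℝ) (hv : Measurable v) (S : Set (Euc d)) :
    Measurable fun x => ∫⁻ y in S, ENNReal.ofReal ((v x - v y) ^ 2) := by
  apply Measurable.lintegral_prod_right (f := fun x y => ENNReal.ofReal ((v x - v y) ^ 2))
  exact ENNReal.measurable_ofReal.comp
    (((hv.comp measurable_fst).sub (hv.comp measurable_snd)).pow_const 2)

end Statement10Aux

namespace Statement10Aux
open Metric Set
variable {d : ℕ}

/-- If all pairs from A × B are ε-close, the energy over A × B is bounded
by the localized energy over Ω × Ω. -/
lemma adj_bound (Ω A B : Set (Euc d)) (hA : MeasurableSet A) (hB : MeasurableSet B)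
    (hAΩ : A ⊆ Ω) (hBΩ : B ⊆ Ω) (ε : ℝ)
    (hclose : ∀ x ∈ A, ∀ y ∈ B, dist x y < ε) (v : Euc d → ℝ) :
    II A B v ≤ ∫⁻ x in Ω, ∫⁻ y in Ω,
      ENNReal.ofReal (if dist x y < ε then (v x - v y) ^ 2 else 0) := by
  have step1 : II A B v ≤ ∫⁻ x in A, ∫⁻ y in Ω,
      ENNReal.ofReal (if dist x y < ε then (v x - v y) ^ 2 else 0) := by
    apply setLIntegral_mono' hA
    intro x hx
    have heq : ∫⁻ y in B, ENNReal.ofReal ((v x - v y) ^ 2) =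
        ∫⁻ y in B, ENNReal.ofReal (if dist x y < ε then (v x - v y) ^ 2 else 0) := by
      apply setLIntegral_congr_fun hB
      exact fun y hy => by simp only [if_pos (hclose x hx y hy)]
    rw [heq]
    exact lintegral_mono_set hBΩ
  exact step1.trans (lintegral_mono_set hAΩ)

/-- Jensen / triangle step through an intermediate set M. -/
lemma mid_bound (A B M : Set (Euc d)) (hMne : volume M ≠ 0) (hMfin : volume M ≠ ∞)
    (hAfin : volume A ≠ ∞) (hBfin : volume B ≠ ∞)
    (v : Euc d → ℝ) (hv : Measurable v) :
    II A B v ≤ (volume M)⁻¹ *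
      (2 * volume B * II A M v + 2 * volume A * II B M v) := by
  set Af : Euc d → ℝ≥0∞ := fun x => ∫⁻ z in M, ENNReal.ofReal ((v x - v z) ^ 2) with hAf
  have hAfm : Measurable Af := meas_inner v hv M
  have key : II A B v * volume M ≤
      2 * volume B * II A M v + 2 * volume A * II B M v := by
    have e1 : II A B v * volume M =
        ∫⁻ x in A, (∫⁻ y in B, ENNReal.ofReal ((v x - v y) ^ 2)) * volume M :=
      (lintegral_mul_const' _ _ hMfin).symm
    have e2 : ∀ x, (∫⁻ y in B, ENNReal.ofReal ((v x - v y) ^ 2)) * volume M =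
        ∫⁻ y in B, ENNReal.ofReal ((v x - v y) ^ 2) * volume M := fun x =>
      (lintegral_mul_const' _ _ hMfin).symm
    rw [e1]
    simp_rw [e2]
    have pointwise : ∀ x y, ENNReal.ofReal ((v x - v y) ^ 2) * volume M ≤
        2 * Af x + 2 * ∫⁻ z in M, ENNReal.ofReal ((v z - v y) ^ 2) := by
      intro x y
      have e3 : ENNReal.ofReal ((v x - v y) ^ 2) * volume M =
          ∫⁻ _ in M, ENNReal.ofReal ((v x - v y) ^ 2) := (setLIntegral_const _ _).symm
      rw [e3]
      calc ∫⁻ z in M, ENNReal.ofReal ((v x - v y) ^ 2)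
          ≤ ∫⁻ z in M, (2 * ENNReal.ofReal ((v x - v z) ^ 2)
              + 2 * ENNReal.ofReal ((v z - v y) ^ 2)) :=
            lintegral_mono fun z => sq_ineq (v x) (v z) (v y)
        _ = 2 * Af x + 2 * ∫⁻ z in M, ENNReal.ofReal ((v z - v y) ^ 2) := by
            rw [lintegral_add_left]
            · rw [lintegral_const_mul' _ _ (by norm_num), lintegral_const_mul' _ _ (by norm_num)]
            · exact (measurable_const.mul (ENNReal.measurable_ofReal.comp
                ((measurable_const.sub hv).pow_const 2))).comp measurable_id |>.mono
                le_rfl le_rfl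
    calc ∫⁻ x in A, ∫⁻ y in B, ENNReal.ofReal ((v x - v y) ^ 2) * volume M
        ≤ ∫⁻ x in A, ∫⁻ y in B,
            (2 * Af x + 2 * ∫⁻ z in M, ENNReal.ofReal ((v z - v y) ^ 2)) :=
          lintegral_mono fun x => lintegral_mono fun y => pointwise x y
      _ = ∫⁻ x in A, (2 * Af x * volume B
            + 2 * ∫⁻ y in B, ∫⁻ z in M, ENNReal.ofReal ((v z - v y) ^ 2)) := by
          apply lintegral_congr fun x => ?_
          rw [lintegral_add_left measurable_const, setLIntegral_const,
            lintegral_const_mul' _ _ (by norm_num)]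
      _ = 2 * volume B * II A M v + 2 * volume A * II B M v := by
          rw [lintegral_add_right _ measurable_const, setLIntegral_const]
          have : ∀ y, (∫⁻ z in M, ENNReal.ofReal ((v z - v y) ^ 2)) =
              ∫⁻ z in M, ENNReal.ofReal ((v y - v z) ^ 2) := by
            intro y; apply lintegral_congr fun z => ?_; rw [← neg_sub, neg_pow]; ring_nf
          simp_rw [this]
          have e4 : ∫⁻ x in A, 2 * Af x * volume B =
              2 * volume B * ∫⁻ x in A, Af x := by
            simp_rw [mul_comm (2 * Af _), ← mul_assoc]
            rw [lintegral_const_mul' _ _ (by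
              exact ENNReal.mul_ne_top hBfin (by norm_num))]
            ring
          rw [e4]
          unfold II
          ring
  rcases eq_or_ne (volume M) 0 with h0 | h0
  · exact absurd h0 hMne
  · rw [← ENNReal.le_div_iff_mul_le (Or.inl h0) (Or.inl hMfin)] at key
    rwa [ENNReal.div_eq_inv_mul] at key

end Statement10Aux

namespace Statement10Aux
open Metric Set
variable {d : ℕ}

lemma lintegral_biUnion_le_sum (T : Finset (Euc d)) (M : Euc d → Set (Euc d))
    (F : Euc d → ℝ≥0∞) :
    ∫⁻ p in ⋃ z ∈ T, M z, F p ≤ ∑ z ∈ T, ∫⁻ p in M z, F p := by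
  classical
  induction T using Finset.induction with
  | empty => simp
  | @insert a s hz ih =>
    rw [Finset.set_biUnion_insert, Finset.sum_insert hz]
    exact (lintegral_union_le _ _ _).trans (add_le_add le_rfl ih)

lemma main (Ω : Set (Euc d)) (hΩo : IsOpen Ω) (hΩc : IsConnected Ω)
    (hΩb : Bornology.IsBounded Ω) (ε : ℝ) (hε : 0 < ε) :
    ∃ C > (0 : ℝ), ∀ v : Euc d → ℝ, Measurable v →
      II Ω Ω v ≤ ENNReal.ofReal C *
        ∫⁻ x in Ω, ∫⁻ y in Ω,
          ENNReal.ofReal (if dist x y < ε then (v x - v y) ^ 2 else 0) := by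
  classical
  set r : ℝ := ε / 4 with hrdef
  have hr : 0 < r := by positivity
  have hΩfin : volume Ω ≠ ⊤ := hΩb.measure_lt_top.ne
  have hTB : TotallyBounded Ω :=
    hΩb.isCompact_closure.totallyBounded.subset subset_closure
  obtain ⟨t, htΩ, htfin, hcov⟩ := finite_approx_of_totallyBounded hTB r hr
  set M : Euc d → Set (Euc d) := fun z => ball z r ∩ Ω with hMdef
  have hMmeas : ∀ z, MeasurableSet (M z) := fun z =>
    (isOpen_ball.inter hΩo).measurableSet
  have hMsub : ∀ z, M z ⊆ Ω := fun z => inter_subset_right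
  have hMfin : ∀ z, volume (M z) ≠ ⊤ := fun z =>
    ((measure_mono (hMsub z)).trans_lt hΩb.measure_lt_top).ne
  have hMpos : ∀ z ∈ t, volume (M z) ≠ 0 := by
    intro z hz
    exact ((isOpen_ball.inter hΩo).measure_pos volume
      ⟨z, mem_ball_self hr, htΩ hz⟩).ne'
  set K : (Euc d → ℝ) → ℝ≥0∞ := fun v => ∫⁻ x in Ω, ∫⁻ y in Ω,
    ENNReal.ofReal (if dist x y < ε then (v x - v y) ^ 2 else 0) with hKdef
  -- ε-closeness of points in nearby cells
  have hMM : ∀ z w : Euc d, dist z w < 2 * r →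
      ∀ x ∈ M z, ∀ y ∈ M w, dist x y < ε := by
    intro z w hzw x hx y hy
    have h1 : dist x z < r := hx.1
    have h2 : dist y w < r := hy.1
    have : dist x y ≤ dist x z + dist z w + dist w y := dist_triangle4 x z w y
    have h3 : dist w y < r := by rwa [dist_comm]
    have : dist x y < r + 2 * r + r := by linarith
    linarith [this, hrdef ▸ (by linarith : r + 2 * r + r = ε)]
  have hadjK : ∀ z w : Euc d, dist z w < 2 * r → ∀ v : Euc d → ℝ,
      II (M z) (M w) v ≤ K v := by
    intro z w hzw v
    exact adj_bound Ω (M z) (M w) (hMmeas z) (hMmeas w) (hMsub z) (hMsub w) ε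
      (hMM z w hzw) v
  -- adjacency relation
  set R : Euc d → Euc d → Prop := fun z w => z ∈ t ∧ w ∈ t ∧ dist z w < 2 * r
    with hRdef
  -- chain bound
  have chain : ∀ z w : Euc d, Relation.ReflTransGen R z w →
      ∃ c : ℝ≥0∞, c ≠ ⊤ ∧ ∀ v : Euc d → ℝ, Measurable v →
        II (M z) (M w) v ≤ c * K v := by
    intro z w h
    induction h with
    | refl =>
      refine ⟨1, one_ne_top, fun v hv => ?_⟩
      rw [one_mul]
      exact hadjK z z (by simpa using by positivity) v
    | @tail b w' hzb hbw ih =>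
      obtain ⟨c, hc, hineq⟩ := ih
      refine ⟨(volume (M b))⁻¹ * (2 * volume (M w') * c + 2 * volume (M z)),
        ?_, ?_⟩
      · apply ENNReal.mul_ne_top (ENNReal.inv_ne_top.2 (hMpos b hbw.1))
        apply ENNReal.add_ne_top.2
        constructor
        · exact ENNReal.mul_ne_top (ENNReal.mul_ne_top (by norm_num) (hMfin w')) hc
        · exact ENNReal.mul_ne_top (by norm_num) (hMfin z)
      · intro v hv
        have h1 := mid_bound (M z) (M w') (M b) (hMpos b hbw.1) (hMfin b)
          (hMfin z) (hMfin w') v hv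
        have h2 := hineq v hv
        have h3 : II (M w') (M b) v ≤ K v := by
          apply hadjK w' b _ v
          rw [dist_comm]; exact hbw.2.2
        calc II (M z) (M w') v
            ≤ (volume (M b))⁻¹ *
              (2 * volume (M w') * II (M z) (M b) v
                + 2 * volume (M z) * II (M w') (M b) v) := h1
          _ ≤ (volume (M b))⁻¹ *
              (2 * volume (M w') * (c * K v) + 2 * volume (M z) * K v) := by
              gcongr
          _ = (volume (M b))⁻¹ * (2 * volume (M w') * c + 2 * volume (M z))
              * K v := by ring
  -- connectivity of the adjacency graph via connectedness of Ω
  have hconn : ∀ z ∈ t, ∀ w ∈ t, Relation.ReflTransGen R z w := by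
    intro z hz w hw
    by_contra hnot
    set S : Set (Euc d) := ⋃ a ∈ {a ∈ t | Relation.ReflTransGen R z a}, ball a r
      with hSdef
    set U : Set (Euc d) := ⋃ a ∈ {a ∈ t | ¬ Relation.ReflTransGen R z a}, ball a r
      with hUdef
    have hSopen : IsOpen S := isOpen_biUnion fun _ _ => isOpen_ball
    have hUopen : IsOpen U := isOpen_biUnion fun _ _ => isOpen_ball
    have hcover' : Ω ⊆ S ∪ U := by
      intro x hx
      obtain ⟨a, ha, hxa⟩ := mem_iUnion₂.1 (hcov hx)
      by_cases hreach : Relation.ReflTransGen R z a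
      · exact Or.inl (mem_biUnion ⟨ha, hreach⟩ hxa)
      · exact Or.inr (mem_biUnion ⟨ha, hreach⟩ hxa)
    have hSne : (Ω ∩ S).Nonempty :=
      ⟨z, htΩ hz, mem_biUnion ⟨hz, Relation.ReflTransGen.refl⟩ (mem_ball_self hr)⟩
    have hUne : (Ω ∩ U).Nonempty :=
      ⟨w, htΩ hw, mem_biUnion ⟨hw, hnot⟩ (mem_ball_self hr)⟩
    obtain ⟨x, hxΩ, hxS, hxU⟩ :=
      hΩc.isPreconnected S U hSopen hUopen hcover' hSne hUne
    obtain ⟨a, ⟨hat, hareach⟩, hxa⟩ := mem_iUnion₂.1 hxS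
    obtain ⟨b, ⟨hbt, hbreach⟩, hxb⟩ := mem_iUnion₂.1 hxU
    apply hbreach
    refine hareach.tail ⟨hat, hbt, ?_⟩
    calc dist a b ≤ dist a x + dist x b := dist_triangle a x b
      _ < r + r := by
          have := mem_ball.1 hxa
          have := mem_ball.1 hxb
          rw [dist_comm a x]; push_cast; linarith [mem_ball.1 hxa, mem_ball.1 hxb]
      _ = 2 * r := by ring
  -- choose constants for every pair
  have hchoice : ∀ z w : Euc d, ∃ c : ℝ≥0∞, c ≠ ⊤ ∧
      (z ∈ t → w ∈ t → ∀ v : Euc d → ℝ, Measurable v →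
        II (M z) (M w) v ≤ c * K v) := by
    intro z w
    by_cases hzw : z ∈ t ∧ w ∈ t
    · obtain ⟨c, hc, h⟩ := chain z w (hconn z hzw.1 w hzw.2)
      exact ⟨c, hc, fun _ _ => h⟩
    · exact ⟨0, zero_ne_top, fun hz' hw' => absurd ⟨hz', hw'⟩ hzw⟩
  choose c hcfin hcineq using hchoice
  set T : Finset (Euc d) := htfin.toFinset with hTdef
  have hTmem : ∀ z, z ∈ T ↔ z ∈ t := fun z => htfin.mem_toFinset
  set Ctot : ℝ≥0∞ := ∑ z ∈ T, ∑ w ∈ T, c z w with hCtotdef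
  have hCtotfin : Ctot ≠ ⊤ := by
    rw [hCtotdef, ← lt_top_iff_ne_top]
    refine ENNReal.sum_lt_top.2 fun z _ => ENNReal.sum_lt_top.2 fun w _ =>
      (hcfin z w).lt_top
  refine ⟨Ctot.toReal + 1, by positivity, fun v hv => ?_⟩
  have hcovM : Ω ⊆ ⋃ z ∈ T, M z := by
    intro x hx
    obtain ⟨a, ha, hxa⟩ := mem_iUnion₂.1 (hcov hx)
    exact mem_biUnion ((hTmem a).2 ha) ⟨hxa, hx⟩
  have sum_cover : ∀ F : Euc d → ℝ≥0∞,
      ∫⁻ p in Ω, F p ≤ ∑ z ∈ T, ∫⁻ p in M z, F p := fun F =>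
    (lintegral_mono_set hcovM).trans (lintegral_biUnion_le_sum T M F)
  have step1 : II Ω Ω v ≤ ∑ z ∈ T, ∑ w ∈ T, II (M z) (M w) v := by
    have inner : ∀ x : Euc d, (∫⁻ y in Ω, ENNReal.ofReal ((v x - v y) ^ 2)) ≤
        ∑ w ∈ T, ∫⁻ y in M w, ENNReal.ofReal ((v x - v y) ^ 2) := fun x =>
      sum_cover _
    calc II Ω Ω v
        ≤ ∫⁻ x in Ω, ∑ w ∈ T, ∫⁻ y in M w, ENNReal.ofReal ((v x - v y) ^ 2) :=
          lintegral_mono inner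
      _ ≤ ∑ z ∈ T, ∫⁻ x in M z,
            ∑ w ∈ T, ∫⁻ y in M w, ENNReal.ofReal ((v x - v y) ^ 2) :=
          sum_cover _
      _ = ∑ z ∈ T, ∑ w ∈ T, II (M z) (M w) v := by
          refine Finset.sum_congr rfl fun z _ => ?_
          exact lintegral_finset_sum T fun w _ => meas_inner v hv (M w)
  have step2 : (∑ z ∈ T, ∑ w ∈ T, II (M z) (M w) v) ≤ Ctot * K v := by
    rw [hCtotdef, Finset.sum_mul]
    refine Finset.sum_le_sum fun z hz => ?_
    rw [Finset.sum_mul]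
    exact Finset.sum_le_sum fun w hw =>
      hcineq z w ((hTmem z).1 hz) ((hTmem w).1 hw) v hv
  refine (step1.trans step2).trans ?_
  apply mul_le_mul_left
  calc Ctot = ENNReal.ofReal Ctot.toReal := (ENNReal.ofReal_toReal hCtotfin).symm
    _ ≤ ENNReal.ofReal (Ctot.toReal + 1) := ENNReal.ofReal_le_ofReal (by linarith)

end Statement10Aux


/-- ε-localization lemma: on a bounded domain Ω there is C > 0 with
∫_Ω∫_Ω (u(x)−u(y))² dy dx ≤ C ∫_Ω∫_Ω (u(x)−u(y))² 1_{‖x−y‖<ε} dy dx for all u ∈ L²(Ω). -/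
theorem statement10 {d : ℕ} (Ω : Set (Euc d)) (hΩo : IsOpen Ω) (hΩc : IsConnected Ω)
    (hΩb : Bornology.IsBounded Ω) (ε : ℝ) (hε : 0 < ε) :
    ∃ C > (0 : ℝ), ∀ u : Euc d → ℝ, MemLp u 2 (volume.restrict Ω) →
      (∫⁻ x in Ω, ∫⁻ y in Ω, ENNReal.ofReal ((u x - u y) ^ 2)) ≤
        ENNReal.ofReal C *
          ∫⁻ x in Ω, ∫⁻ y in Ω,
            ENNReal.ofReal (if dist x y < ε then (u x - u y) ^ 2 else 0) := by
  classical
  obtain ⟨C, hC, hmain⟩ := Statement10Aux.main Ω hΩo hΩc hΩb ε hε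
  refine ⟨C, hC, fun u hu => ?_⟩
  set v : Euc d → ℝ := hu.aestronglyMeasurable.mk u with hvdef
  have hvm : Measurable v := hu.aestronglyMeasurable.stronglyMeasurable_mk.measurable
  have huv : u =ᵐ[volume.restrict Ω] v := hu.aestronglyMeasurable.ae_eq_mk
  have h1 : (∫⁻ x in Ω, ∫⁻ y in Ω, ENNReal.ofReal ((u x - u y) ^ 2)) =
      ∫⁻ x in Ω, ∫⁻ y in Ω, ENNReal.ofReal ((v x - v y) ^ 2) := by
    refine lintegral_congr_ae (huv.mono fun x hx => ?_)
    simp only [hx]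
    exact lintegral_congr_ae (huv.mono fun y hy => by simp only [hy])
  have h2 : (∫⁻ x in Ω, ∫⁻ y in Ω,
        ENNReal.ofReal (if dist x y < ε then (u x - u y) ^ 2 else 0)) =
      ∫⁻ x in Ω, ∫⁻ y in Ω,
        ENNReal.ofReal (if dist x y < ε then (v x - v y) ^ 2 else 0) := by
    refine lintegral_congr_ae (huv.mono fun x hx => ?_)
    exact lintegral_congr_ae (huv.mono fun y hy => by simp only [hx, hy])
  rw [h1, h2]
  exact hmain v hvm
end
end

section
/- Let Ω ⊂ ℝᵈ be a bounded domain, ε > 0 finite, and γ a nonnegative measurable kernel with γ(x,y) ≥ C₁ > 0 for a.e. x,y ∈ Ω with ‖x−y‖ ≤ ε. Then the nonlocal Poincaré inequality holds on V(Ω;γ). -/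
open MeasureTheory ENNReal Filter

noncomputable section

namespace S11
variable {d : ℕ}

def J (u : Euc d → ℝ) (A B : Set (Euc d)) : ℝ≥0∞ :=
  ∫⁻ x in A, ∫⁻ y in B, ENNReal.ofReal ((u x - u y) ^ 2)

lemma meas_pair {u : Euc d → ℝ} (hu : Measurable u) :
    Measurable fun p : Euc d × Euc d => ENNReal.ofReal ((u p.1 - u p.2) ^ 2) :=
  (((hu.comp measurable_fst).sub (hu.comp measurable_snd)).pow_const 2).ennreal_ofReal

lemma J_swap {u : Euc d → ℝ} (hu : Measurable u) (A B : Set (Euc d)) :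
    J u A B = J u B A := by
  unfold J
  rw [lintegral_lintegral_swap ((meas_pair hu).aemeasurable)]
  refine lintegral_congr fun y => lintegral_congr fun x => ?_
  rw [show (u x - u y) ^ 2 = (u y - u x) ^ 2 by ring]

lemma J_chain {u : Euc d → ℝ} (hu : Measurable u) (A B C : Set (Euc d)) :
    volume B * J u A C ≤ 2 * volume C * J u A B + 2 * volume A * J u B C := by
  set f : Euc d → Euc d → ℝ≥0∞ := fun x y => ENNReal.ofReal ((u x - u y) ^ 2) with hf
  have hfm : Measurable (Function.uncurry f) := meas_pair hu
  have hsect₁ : ∀ x, Measurable fun y => f x y := fun x => hfm.comp measurable_prodMk_left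
  have hsect₂ : ∀ z, Measurable fun y => f y z := fun z => hfm.comp (measurable_id.prodMk measurable_const)
  set F : Euc d → ℝ≥0∞ := fun x => ∫⁻ y in B, f x y with hF
  set G : Euc d → ℝ≥0∞ := fun z => ∫⁻ y in B, f y z with hG
  have hFm : Measurable F := hfm.lintegral_prod_right
  have hGm : Measurable G := by
    have : Measurable (Function.uncurry fun z y => f y z) :=
      hfm.comp measurable_swap
    exact this.lintegral_prod_right
  have hpt : ∀ x z, volume B * f x z ≤ 2 * F x + 2 * G z := by
    intro x z
    have h0 : volume B * f x z = ∫⁻ _ in B, f x z := by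
      rw [setLIntegral_const, mul_comm]
    rw [h0]
    calc ∫⁻ _ in B, f x z ≤ ∫⁻ y in B, (2 * f x y + 2 * f y z) := by
          refine lintegral_mono fun y => ?_
          have hsq : (u x - u z) ^ 2 ≤ 2 * (u x - u y) ^ 2 + 2 * (u y - u z) ^ 2 := by nlinarith [sq_nonneg (u x - u y), sq_nonneg (u y - u z), sq_nonneg (u x - 2*u y + u z)]
          calc f x z ≤ ENNReal.ofReal (2 * (u x - u y) ^ 2 + 2 * (u y - u z) ^ 2) :=
                ENNReal.ofReal_le_ofReal hsq
            _ = 2 * f x y + 2 * f y z := by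
                rw [ENNReal.ofReal_add (by positivity) (by positivity),
                  ENNReal.ofReal_mul (by norm_num), ENNReal.ofReal_mul (by norm_num)]
                norm_num
                rfl
      _ = 2 * F x + 2 * G z := by
          rw [lintegral_add_left ((hsect₁ x).const_mul 2), lintegral_const_mul 2 (hsect₁ x),
            lintegral_const_mul 2 (hsect₂ z)]
  have hFixed : ∀ x, volume B * ∫⁻ z in C, f x z = ∫⁻ z in C, volume B * f x z :=
    fun x => (lintegral_const_mul _ (hsect₁ x)).symm
  calc volume B * J u A C = ∫⁻ x in A, volume B * ∫⁻ z in C, f x z := by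
        rw [J, lintegral_const_mul _ (hfm.lintegral_prod_right)]
    _ = ∫⁻ x in A, ∫⁻ z in C, volume B * f x z := lintegral_congr fun x => hFixed x
    _ ≤ ∫⁻ x in A, ∫⁻ z in C, (2 * F x + 2 * G z) :=
        lintegral_mono fun x => lintegral_mono fun z => hpt x z
    _ = ∫⁻ x in A, ((2 * F x) * volume C + 2 * ∫⁻ z in C, G z) := by
        refine lintegral_congr fun x => ?_
        rw [lintegral_add_left measurable_const, setLIntegral_const,
          lintegral_const_mul 2 hGm]
    _ = 2 * volume C * J u A B + 2 * volume A * J u B C := by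
        have hJAB : J u A B = ∫⁻ x in A, F x := rfl
        have hswap : ∫⁻ z in C, G z = J u B C := by
          have h := lintegral_lintegral_swap (μ := volume.restrict C)
            (ν := volume.restrict B) (f := fun z y => f y z)
            ((hfm.comp measurable_swap).aemeasurable)
          exact h
        rw [lintegral_add_right _ measurable_const, setLIntegral_const, hswap,
          show (fun x => 2 * F x * volume C) = fun x => (2 * volume C) * F x from
            funext fun x => by ring,
          lintegral_const_mul _ hFm, ← hJAB]
        ring
def eF (ε : ℝ) (u : Euc d → ℝ) (x y : Euc d) : ℝ≥0∞ :=
  if dist x y ≤ ε then ENNReal.ofReal ((u x - u y) ^ 2) else 0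

def Eloc (Ω : Set (Euc d)) (ε : ℝ) (u : Euc d → ℝ) : ℝ≥0∞ :=
  ∫⁻ x in Ω, ∫⁻ y in Ω, eF ε u x y

lemma meas_eF {ε : ℝ} {u : Euc d → ℝ} (hu : Measurable u) :
    Measurable (Function.uncurry (eF ε u)) := by
  unfold eF Function.uncurry
  exact Measurable.ite
    (isClosed_le (continuous_fst.dist continuous_snd) continuous_const).measurableSet
    (meas_pair hu) measurable_const

/-- If all pairs from A × B are within distance ε, the double integral is bounded by Eloc. -/
lemma J_le_Eloc {ε : ℝ} {u : Euc d → ℝ} (hu : Measurable u) {Ω A B : Set (Euc d)}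
    (hA : A ⊆ Ω) (hB : B ⊆ Ω) (hd : ∀ x ∈ A, ∀ y ∈ B, dist x y ≤ ε) :
    J u A B ≤ Eloc Ω ε u := by
  have hinner : Measurable fun x => ∫⁻ y in Ω, eF ε u x y :=
    (meas_eF hu).lintegral_prod_right
  have h1 : J u A B ≤ ∫⁻ x in A, ∫⁻ y in Ω, eF ε u x y := by
    refine setLIntegral_mono hinner fun x hx => ?_
    have hsect : Measurable fun y => eF ε u x y := by
      unfold eF
      exact Measurable.ite
        (isClosed_le (continuous_const.dist continuous_id) continuous_const).measurableSet
        (((measurable_const.sub hu).pow_const 2).ennreal_ofReal) measurable_const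
    calc (∫⁻ y in B, ENNReal.ofReal ((u x - u y) ^ 2))
        ≤ ∫⁻ y in B, eF ε u x y := by
          refine setLIntegral_mono hsect fun y hy => ?_
          simp only [eF, if_pos (hd x hx y hy)]
          exact le_refl _
      _ ≤ ∫⁻ y in Ω, eF ε u x y := lintegral_mono_set hB
  exact h1.trans (lintegral_mono_set hA)

lemma Eloc_le_energy {Ω : Set (Euc d)} {γ : Euc d → Euc d → ℝ}
    (hγm : Measurable (Function.uncurry γ)) {ε C₁ : ℝ} (hC₁ : 0 < C₁)
    (hlow : ∀ᵐ p ∂(volume.restrict (Ω ×ˢ Ω)), dist p.1 p.2 ≤ ε → C₁ ≤ γ p.1 p.2)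
    {v : Euc d → ℝ} (hv : Measurable v) :
    ENNReal.ofReal C₁ * Eloc Ω ε v ≤ energy Ω γ v := by
  have hprodmeas : (volume.restrict Ω).prod (volume.restrict Ω)
      = (volume.restrict (Ω ×ˢ Ω) : Measure (Euc d × Euc d)) := by
    rw [Measure.prod_restrict, ← Measure.volume_eq_prod]
  have hμ2 : True := trivial
  have hRmeas : Measurable fun p : Euc d × Euc d =>
      ENNReal.ofReal ((v p.1 - v p.2) ^ 2 * γ p.2 p.1) :=
    ((((hv.comp measurable_fst).sub (hv.comp measurable_snd)).pow_const 2).mul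
      (hγm.comp measurable_swap)).ennreal_ofReal
  have step1 : Eloc Ω ε v = ∫⁻ p, Function.uncurry (eF ε v) p ∂(volume.restrict (Ω ×ˢ Ω)) := by
    rw [← hprodmeas, lintegral_prod _ (meas_eF hv).aemeasurable]; rfl
  have hswapmp : MeasurePreserving (Prod.swap) (volume.restrict (Ω ×ˢ Ω) : Measure (Euc d × Euc d)) (volume.restrict (Ω ×ˢ Ω)) := by
    rw [← hprodmeas]; exact Measure.measurePreserving_swap
  have hlow' : ∀ᵐ p ∂(volume.restrict (Ω ×ˢ Ω)), dist p.2 p.1 ≤ ε → C₁ ≤ γ p.2 p.1 :=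
    hswapmp.quasiMeasurePreserving.tendsto_ae.eventually hlow
  have step3 : (∫⁻ p, ENNReal.ofReal C₁ * Function.uncurry (eF ε v) p ∂(volume.restrict (Ω ×ˢ Ω)))
      ≤ ∫⁻ p, ENNReal.ofReal ((v p.1 - v p.2) ^ 2 * γ p.2 p.1) ∂(volume.restrict (Ω ×ˢ Ω)) := by
    refine lintegral_mono_ae ?_
    filter_upwards [hlow'] with p hp
    by_cases hd : dist p.1 p.2 ≤ ε
    · have hg : C₁ ≤ γ p.2 p.1 := hp (by rwa [dist_comm])
      simp only [Function.uncurry, eF, if_pos hd]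
      rw [← ENNReal.ofReal_mul hC₁.le]
      exact ENNReal.ofReal_le_ofReal (by nlinarith [sq_nonneg (v p.1 - v p.2)])
    · simp only [Function.uncurry, eF, if_neg hd, mul_zero]
      exact zero_le
  have step4 : (∫⁻ p, ENNReal.ofReal ((v p.1 - v p.2) ^ 2 * γ p.2 p.1) ∂(volume.restrict (Ω ×ˢ Ω)))
      = ∫⁻ x in Ω, ∫⁻ y in Ω, ENNReal.ofReal ((v x - v y) ^ 2 * γ y x) := by
    rw [← hprodmeas, lintegral_prod _ hRmeas.aemeasurable]
  calc ENNReal.ofReal C₁ * Eloc Ω ε v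
      = ∫⁻ p, ENNReal.ofReal C₁ * Function.uncurry (eF ε v) p ∂(volume.restrict (Ω ×ˢ Ω)) := by
        rw [step1, lintegral_const_mul _ (meas_eF hv)]
    _ ≤ ∫⁻ p, ENNReal.ofReal ((v p.1 - v p.2) ^ 2 * γ p.2 p.1) ∂(volume.restrict (Ω ×ˢ Ω)) := step3
    _ = ∫⁻ x in Ω, ∫⁻ y in Ω, ENNReal.ofReal ((v x - v y) ^ 2 * γ y x) := step4
    _ ≤ energy Ω γ v := lintegral_mono fun x => setLIntegral_le_lintegral _ _

end S11


/-- if γ ≥ C₁ > 0 a.e. on pairs of points of Ω at distance ≤ ε, the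
nonlocal Poincaré inequality holds on V(Ω;γ). -/
theorem statement11 {d : ℕ} (Ω : Set (Euc d)) (hΩo : IsOpen Ω) (hΩc : IsConnected Ω)
    (hΩb : Bornology.IsBounded Ω)
    (γ : Euc d → Euc d → ℝ) (hγm : Measurable (Function.uncurry γ)) (hγ0 : ∀ x y, 0 ≤ γ x y)
    (ε : ℝ) (hε : 0 < ε) (C₁ : ℝ) (hC₁ : 0 < C₁)
    (hlow : ∀ᵐ p ∂(volume.restrict (Ω ×ˢ Ω)), dist p.1 p.2 ≤ ε → C₁ ≤ γ p.1 p.2) :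
    PoincareHolds Ω γ := by
  classical
  obtain ⟨⟨x₀, hx₀⟩, hpre⟩ := hΩc
  set r : ℝ := ε / 4 with hr
  have hr0 : 0 < r := by positivity
  obtain ⟨t, htK, htcov⟩ := (hΩb.isCompact_closure).elim_nhds_subcover
    (fun c => Metric.ball c r) (fun c _ => Metric.ball_mem_nhds c hr0)
  set B : Euc d → Set (Euc d) := fun c => Ω ∩ Metric.ball c r with hB
  have hBopen : ∀ c, IsOpen (B c) := fun c => hΩo.inter Metric.isOpen_ball
  have hBsub : ∀ c, B c ⊆ Ω := fun c => Set.inter_subset_left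
  have hBfin : ∀ c, volume (B c) ≠ ⊤ :=
    fun c => ((measure_mono Set.inter_subset_right).trans_lt measure_ball_lt_top).ne
  have hBne : ∀ c ∈ t, (B c).Nonempty := by
    intro c hc
    have h := mem_closure_iff.1 (htK c hc) (Metric.ball c r) Metric.isOpen_ball
      (Metric.mem_ball_self hr0)
    exact h.imp fun x hx => ⟨hx.2, hx.1⟩
  have hcov : Ω ⊆ ⋃ c ∈ t, B c := by
    intro x hx
    obtain ⟨c, hct, hxc⟩ := Set.mem_iUnion₂.1 (htcov (subset_closure hx))
    exact Set.mem_iUnion₂.2 ⟨c, hct, hx, hxc⟩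
  set adj : Euc d → Euc d → Prop := fun a b => (B a ∩ B b).Nonempty with hadj
  have hsym : Symmetric adj := fun a b h => by
    rw [hadj] at h ⊢; rwa [Set.inter_comm] at h
  have hdistadj : ∀ a b, adj a b → ∀ x ∈ B a, ∀ y ∈ B b, dist x y ≤ ε := by
    rintro a b ⟨z, hza, hzb⟩ x hx y hy
    have t1 : dist x y ≤ dist x a + dist a z + dist z y := dist_triangle4 x a z y
    have t2 : dist z y ≤ dist z b + dist b y := dist_triangle z b y
    have e1 : dist a z = dist z a := dist_comm a z
    have e2 : dist b y = dist y b := dist_comm b y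
    have h1 : dist x a < r := Metric.mem_ball.1 hx.2
    have h2 : dist z a < r := Metric.mem_ball.1 hza.2
    have h3 : dist z b < r := Metric.mem_ball.1 hzb.2
    have h4 : dist y b < r := Metric.mem_ball.1 hy.2
    have hre : r = ε / 4 := hr
    linarith
  have hstep : ∀ a b, adj a b → ∀ v : Euc d → ℝ, Measurable v →
      S11.J v (B a) (B b) ≤ S11.Eloc Ω ε v := fun a b hab v hv =>
    S11.J_le_Eloc hv (hBsub a) (hBsub b) (hdistadj a b hab)
  have hpair : ∀ a, a ∈ t → ∀ b, Relation.ReflTransGen adj a b →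
      ∃ Cp : ℝ≥0∞, Cp ≠ ⊤ ∧ ∀ v : Euc d → ℝ, Measurable v →
        S11.J v (B a) (B b) ≤ Cp * S11.Eloc Ω ε v := by
    intro a ha b hab
    induction hab with
    | refl =>
      refine ⟨1, one_ne_top, fun v hv => ?_⟩
      rw [one_mul]
      have haa : adj a a := by
        obtain ⟨x, hx⟩ := hBne a ha
        exact ⟨x, hx, hx⟩
      exact hstep a a haa v hv
    | @tail m c ham hmc ih =>
      obtain ⟨Cp, hCpT, hCp⟩ := ih
      have hm0 : volume (B m) ≠ 0 := by
        obtain ⟨z, hz⟩ := hmc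
        exact ((hBopen m).measure_pos volume ⟨z, hz.1⟩).ne'
      refine ⟨(2 * volume (B c) * Cp + 2 * volume (B a)) / volume (B m), ?_, ?_⟩
      · refine (ENNReal.div_lt_top ?_ hm0).ne
        exact ENNReal.add_ne_top.2
          ⟨ENNReal.mul_ne_top (ENNReal.mul_ne_top ofNat_ne_top (hBfin c)) hCpT,
           ENNReal.mul_ne_top ofNat_ne_top (hBfin a)⟩
      · intro v hv
        have h1 : S11.J v (B a) (B c) * volume (B m) ≤
            2 * volume (B c) * S11.J v (B a) (B m) +
              2 * volume (B a) * S11.J v (B m) (B c) := by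
          rw [mul_comm]; exact S11.J_chain hv (B a) (B m) (B c)
        have h2 : 2 * volume (B c) * S11.J v (B a) (B m) +
              2 * volume (B a) * S11.J v (B m) (B c) ≤
            2 * volume (B c) * (Cp * S11.Eloc Ω ε v) +
              2 * volume (B a) * S11.Eloc Ω ε v :=
          add_le_add (mul_le_mul_right (hCp v hv) _)
            (mul_le_mul_right (hstep m c hmc v hv) _)
        have h3 : 2 * volume (B c) * (Cp * S11.Eloc Ω ε v) +
              2 * volume (B a) * S11.Eloc Ω ε v
            = (2 * volume (B c) * Cp + 2 * volume (B a)) * S11.Eloc Ω ε v := by ring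
        have h4 : S11.J v (B a) (B c) ≤
            (2 * volume (B c) * Cp + 2 * volume (B a)) * S11.Eloc Ω ε v /
              volume (B m) := by
          rw [ENNReal.le_div_iff_mul_le (Or.inl hm0) (Or.inl (hBfin m))]
          exact h1.trans (h2.trans_eq h3)
        refine h4.trans_eq ?_
        rw [ENNReal.div_eq_inv_mul, ENNReal.div_eq_inv_mul, mul_assoc]
        ring
  obtain ⟨c₀, hc₀t, hx₀c₀⟩ : ∃ c ∈ t, x₀ ∈ Metric.ball c r := by
    simpa using htcov (subset_closure hx₀)
  have hreach₀ : ∀ b ∈ t, Relation.ReflTransGen adj c₀ b := by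
    by_contra hcon
    push_neg at hcon
    obtain ⟨b₀, hb₀t, hb₀⟩ := hcon
    have hUo : IsOpen (⋃ c ∈ {c | c ∈ t ∧ Relation.ReflTransGen adj c₀ c}, B c) :=
      isOpen_biUnion fun c _ => hBopen c
    have hVo : IsOpen (⋃ c ∈ {c | c ∈ t ∧ ¬ Relation.ReflTransGen adj c₀ c}, B c) :=
      isOpen_biUnion fun c _ => hBopen c
    have hΩUV : Ω ⊆ (⋃ c ∈ {c | c ∈ t ∧ Relation.ReflTransGen adj c₀ c}, B c) ∪
        (⋃ c ∈ {c | c ∈ t ∧ ¬ Relation.ReflTransGen adj c₀ c}, B c) := by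
      intro x hx
      obtain ⟨c, hct, hxc⟩ := Set.mem_iUnion₂.1 (hcov hx)
      by_cases hrc : Relation.ReflTransGen adj c₀ c
      · exact Or.inl (Set.mem_biUnion ⟨hct, hrc⟩ hxc)
      · exact Or.inr (Set.mem_biUnion ⟨hct, hrc⟩ hxc)
    have hU : (Ω ∩ ⋃ c ∈ {c | c ∈ t ∧ Relation.ReflTransGen adj c₀ c}, B c).Nonempty :=
      ⟨x₀, hx₀, Set.mem_biUnion ⟨hc₀t, Relation.ReflTransGen.refl⟩ ⟨hx₀, hx₀c₀⟩⟩
    have hV : (Ω ∩ ⋃ c ∈ {c | c ∈ t ∧ ¬ Relation.ReflTransGen adj c₀ c}, B c).Nonempty := by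
      obtain ⟨z, hz⟩ := hBne b₀ hb₀t
      exact ⟨z, hz.1, Set.mem_biUnion ⟨hb₀t, hb₀⟩ hz⟩
    obtain ⟨z, hzΩ, hzU, hzV⟩ := hpre _ _ hUo hVo hΩUV hU hV
    obtain ⟨c, hcS, hzc⟩ := Set.mem_iUnion₂.1 hzU
    obtain ⟨c', hcS', hzc'⟩ := Set.mem_iUnion₂.1 hzV
    exact hcS'.2 (hcS.2.tail ⟨z, hzc, hzc'⟩)
  have hreach : ∀ a ∈ t, ∀ b ∈ t, Relation.ReflTransGen adj a b := fun a ha b hb =>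
    (haveI : Std.Symm adj := ⟨hsym⟩; Std.Symm.symm _ _ (hreach₀ a ha)).trans (hreach₀ b hb)
  have hchoice : ∀ p : Euc d × Euc d, ∃ Cp : ℝ≥0∞, Cp ≠ ⊤ ∧ (p.1 ∈ t → p.2 ∈ t →
      ∀ v : Euc d → ℝ, Measurable v →
        S11.J v (B p.1) (B p.2) ≤ Cp * S11.Eloc Ω ε v) := by
    intro p
    by_cases hp : p.1 ∈ t ∧ p.2 ∈ t
    · obtain ⟨Cp, h1, h2⟩ := hpair p.1 hp.1 p.2 (hreach p.1 hp.1 p.2 hp.2)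
      exact ⟨Cp, h1, fun _ _ => h2⟩
    · exact ⟨0, zero_ne_top, fun h1 h2 => absurd ⟨h1, h2⟩ hp⟩
  choose Cf hCfT hCf using hchoice
  set Ct : ℝ≥0∞ := ∑ p ∈ t ×ˢ t, Cf p with hCt
  have hCtT : Ct ≠ ⊤ :=
    (ENNReal.sum_lt_top.2 fun p _ => (hCfT p).lt_top).ne
  have hμle : (volume.restrict Ω : Measure (Euc d)) ≤ ∑ c ∈ t, volume.restrict (B c) := by
    refine Measure.le_iff.2 fun s hs => ?_
    rw [Measure.restrict_apply hs]
    have h1 : s ∩ Ω ⊆ ⋃ c ∈ t, (s ∩ B c) := by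
      intro x hx
      obtain ⟨c, hct, hxc⟩ := Set.mem_iUnion₂.1 (hcov hx.2)
      exact Set.mem_iUnion₂.2 ⟨c, hct, hx.1, hxc⟩
    calc volume (s ∩ Ω) ≤ ∑ c ∈ t, volume (s ∩ B c) :=
          (measure_mono h1).trans (measure_biUnion_finset_le t _)
      _ = (∑ c ∈ t, volume.restrict (B c)) s := by
          rw [Measure.finset_sum_apply]
          exact Finset.sum_congr rfl fun c _ => (Measure.restrict_apply hs).symm
  have hcoverJ : ∀ v : Euc d → ℝ, Measurable v →
      S11.J v Ω Ω ≤ ∑ p ∈ t ×ˢ t, S11.J v (B p.1) (B p.2) := by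
    intro v hv
    have hfm := S11.meas_pair hv
    have hinner : ∀ A : Set (Euc d),
        Measurable fun x => ∫⁻ y in A, ENNReal.ofReal ((v x - v y) ^ 2) := fun A =>
      Measurable.lintegral_prod_right (f := fun x y => ENNReal.ofReal ((v x - v y) ^ 2)) hfm
    have hin : ∀ x, (∫⁻ y in Ω, ENNReal.ofReal ((v x - v y) ^ 2)) ≤
        ∑ c' ∈ t, ∫⁻ y in B c', ENNReal.ofReal ((v x - v y) ^ 2) := by
      intro x
      calc (∫⁻ y in Ω, ENNReal.ofReal ((v x - v y) ^ 2))
          ≤ ∫⁻ y, ENNReal.ofReal ((v x - v y) ^ 2)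
              ∂(∑ c' ∈ t, volume.restrict (B c')) := lintegral_mono' hμle le_rfl
        _ = ∑ c' ∈ t, ∫⁻ y in B c', ENNReal.ofReal ((v x - v y) ^ 2) :=
            lintegral_finset_sum_measure t _ _
    calc S11.J v Ω Ω
        ≤ ∫⁻ x in Ω, ∑ c' ∈ t, ∫⁻ y in B c', ENNReal.ofReal ((v x - v y) ^ 2) :=
          lintegral_mono hin
      _ = ∑ c' ∈ t, ∫⁻ x in Ω, ∫⁻ y in B c', ENNReal.ofReal ((v x - v y) ^ 2) :=
          lintegral_finset_sum' t fun c' _ => (hinner (B c')).aemeasurable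
      _ ≤ ∑ c' ∈ t, ∑ c ∈ t, S11.J v (B c) (B c') := by
          refine Finset.sum_le_sum fun c' _ => ?_
          calc (∫⁻ x in Ω, ∫⁻ y in B c', ENNReal.ofReal ((v x - v y) ^ 2))
              ≤ ∫⁻ x, (∫⁻ y in B c', ENNReal.ofReal ((v x - v y) ^ 2))
                  ∂(∑ c ∈ t, volume.restrict (B c)) := lintegral_mono' hμle le_rfl
            _ = ∑ c ∈ t, S11.J v (B c) (B c') := lintegral_finset_sum_measure t _ _
      _ = ∑ p ∈ t ×ˢ t, S11.J v (B p.1) (B p.2) := by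
          rw [Finset.sum_product]
          exact Finset.sum_comm
  have hoC₁0 : ENNReal.ofReal C₁ ≠ 0 := (ENNReal.ofReal_pos.2 hC₁).ne'
  have hCfin : Ct / ENNReal.ofReal C₁ ≠ ⊤ := (ENNReal.div_lt_top hCtT hoC₁0).ne
  refine ⟨(Ct / ENNReal.ofReal C₁).toReal + 1, by positivity, fun v hvmem => ?_⟩
  obtain ⟨hv, -⟩ := hvmem
  have hEn : S11.Eloc Ω ε v ≤ energy Ω γ v / ENNReal.ofReal C₁ := by
    rw [ENNReal.le_div_iff_mul_le (Or.inl hoC₁0) (Or.inl ofReal_ne_top), mul_comm]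
    exact S11.Eloc_le_energy hγm hC₁ hlow hv
  have hmain : S11.J v Ω Ω ≤ Ct * (energy Ω γ v / ENNReal.ofReal C₁) := by
    calc S11.J v Ω Ω ≤ ∑ p ∈ t ×ˢ t, S11.J v (B p.1) (B p.2) := hcoverJ v hv
      _ ≤ ∑ p ∈ t ×ˢ t, Cf p * S11.Eloc Ω ε v := by
          refine Finset.sum_le_sum fun p hp => ?_
          obtain ⟨h1, h2⟩ := Finset.mem_product.1 hp
          exact hCf p h1 h2 v hv
      _ = Ct * S11.Eloc Ω ε v := by rw [hCt, Finset.sum_mul]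
      _ ≤ Ct * (energy Ω γ v / ENNReal.ofReal C₁) := mul_le_mul_right hEn _
  have hrearr : Ct * (energy Ω γ v / ENNReal.ofReal C₁)
      = (Ct / ENNReal.ofReal C₁) * energy Ω γ v := by
    rw [ENNReal.div_eq_inv_mul, ENNReal.div_eq_inv_mul]; ring
  have hCle : Ct / ENNReal.ofReal C₁ ≤
      ENNReal.ofReal ((Ct / ENNReal.ofReal C₁).toReal + 1) := by
    calc Ct / ENNReal.ofReal C₁
        = ENNReal.ofReal (Ct / ENNReal.ofReal C₁).toReal :=
          (ENNReal.ofReal_toReal hCfin).symm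
      _ ≤ _ := ENNReal.ofReal_le_ofReal (by linarith)
  calc (∫⁻ x in Ω, ∫⁻ y in Ω, ENNReal.ofReal ((v x - v y) ^ 2))
      ≤ (Ct / ENNReal.ofReal C₁) * energy Ω γ v := hmain.trans_eq hrearr
    _ ≤ ENNReal.ofReal ((Ct / ENNReal.ofReal C₁).toReal + 1) * energy Ω γ v :=
        mul_le_mul_left hCle _
end
end
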